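/- arXiv:1302.3059 — 9 statements merged into one kernel-verified Lean document; each statement's English description precedes it below -/
import Mathlib

section
/- Let X be a group, let i ∈ X be an involution, and let x ∈ X be such that w = i·i^x has odd order m. Then the element ζ₁(x) := w^{(m+1)/2}·x^{-1} lies in the centralizer C_X(i). -/
/-
Write `j = x⁻¹ * i * x` and `w = i * j`. As `i` and `j` are involutions, conjugation by `i` inverts
`w`, hence every power of `w`. Since `m` is odd, `u = w ^ ((m + 1) / 2)` is a square root of `w`,
so `u⁻¹ * i * u = u⁻¹ * u⁻¹ * i = w⁻¹ * i = j`. Thus `i` is conjugated to the same element by `u`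
and by `x`, i.e. `u * x⁻¹` centralizes `i`.
-/

section
variable {G : Type*} [Group G]

theorem mul_mul_pow_eq_inv_mul {a b : G} (ha : a * a = 1) (hb : b * b = 1) (n : ℕ) :
    a * (a * b) ^ n = ((a * b) ^ n)⁻¹ * a := by
  have ha' : a⁻¹ = a := inv_eq_of_mul_eq_one_right ha
  have hb' : b⁻¹ = b := inv_eq_of_mul_eq_one_right hb
  have hinv : a * (a * b) * a⁻¹ = (a * b)⁻¹ := by
    rw [mul_inv_rev, ha', hb', ← mul_assoc, ha, one_mul]
  rw [← inv_pow, ← hinv, conj_pow, inv_mul_cancel_right]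

theorem inv_mul_mul_eq_of_sq_eq {a b : G} (ha : a * a = 1) (hb : b * b = 1) (n : ℕ)
    (hsq : ((a * b) ^ n) ^ 2 = a * b) : ((a * b) ^ n)⁻¹ * a * (a * b) ^ n = b := by
  rw [mul_assoc, mul_mul_pow_eq_inv_mul ha hb, ← mul_assoc, ← mul_inv_rev, ← sq, hsq,
    mul_inv_rev, inv_mul_cancel_right, inv_eq_of_mul_eq_one_right hb]

theorem mul_inv_mem_centralizer_of_conj_eq {a u x : G} (h : u⁻¹ * a * u = x⁻¹ * a * x) :
    u * x⁻¹ ∈ Subgroup.centralizer ({a} : Set G) := by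
  rw [Subgroup.mem_centralizer_singleton_iff]
  calc u * x⁻¹ * a = u * (x⁻¹ * a * x) * x⁻¹ := by group
    _ = a * (u * x⁻¹) := by rw [← h]; group

end

theorem pow_orderOf_add_one_div_two_sq {M : Type*} [Monoid M] {w : M} (h : Odd (orderOf w)) :
    (w ^ ((orderOf w + 1) / 2)) ^ 2 = w := by
  obtain ⟨k, hk⟩ := h
  rw [← pow_mul, show (orderOf w + 1) / 2 * 2 = orderOf w + 1 by omega, pow_succ,
    pow_orderOf_eq_one, one_mul]

/-- Let `X` be a group, `i ∈ X` an involution, and `x ∈ X` such that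
`w = i * i^x` has odd order `m`.  Then `ζ₁(x) = w^((m+1)/2) * x⁻¹` lies in the
centralizer `C_X(i)`. -/
theorem zeta1_mem_centralizer (X : Type*) [Group X] (i x : X) (hi : orderOf i = 2)
    (m : ℕ) (hm : orderOf (i * (x⁻¹ * i * x)) = m) (hmodd : Odd m) :
    (i * (x⁻¹ * i * x)) ^ ((m + 1) / 2) * x⁻¹ ∈
      Subgroup.centralizer ({i} : Set X) := by
  have hii : i * i = 1 := by rw [← sq, ← hi, pow_orderOf_eq_one]
  have hjj : x⁻¹ * i * x * (x⁻¹ * i * x) = 1 := by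
    simp [mul_assoc, ← mul_assoc i i, hii]
  subst hm
  exact mul_inv_mem_centralizer_of_conj_eq <|
    inv_mul_mul_eq_of_sq_eq hii hjj _ (pow_orderOf_add_one_div_two_sq hmodd)
end

section
/- Let X be a group, let i ∈ X be an involution, and let x ∈ X be such that w = i·i^x has even order n. Then ζ₀(x) := w^{n/2} is an involution lying in the centralizer C_X(i). Moreover, for every c ∈ C_X(i) one has i·i^{xc} = w^c, and hence ζ₀(xc) = (ζ₀(x))^c; in particular, the set of all elements ζ₀(x), taken over all x ∈ X with i·i^x of even order, is a normal subset of involutions of C_X(i). -/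
/-!
Two involutions `i`, `j` generate a dihedral group in which `i` inverts `w = i * j`. If `w` has
even order `n`, then `w ^ (n / 2)` is the central involution of that dihedral group: being
inverted by `i` and equal to its own inverse, it commutes with `i`. Conjugating `x` on the right
by `c ∈ C(i)` conjugates `w` by `c`, which preserves orders and hence carries `ζ₀(x)` to `ζ₀(x)^c`.
-/

/-- The set of all values `ζ₀(x) = (i·i^x)^{n_x/2}`, taken over all `x` such that
`i·i^x` has (finite, positive) even order `n_x`. -/
def zeta0Set (X : Type*) [Group X] (i : X) : Set X :=
  {y : X | ∃ x : X, Even (orderOf (i * (x⁻¹ * i * x))) ∧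
      0 < orderOf (i * (x⁻¹ * i * x)) ∧
      y = (i * (x⁻¹ * i * x)) ^ (orderOf (i * (x⁻¹ * i * x)) / 2)}

section
variable {G : Type*} [Group G]

theorem orderOf_inv_mul_mul (a b : G) : orderOf (b⁻¹ * a * b) = orderOf a :=
  SemiconjBy.orderOf_eq b (x := b⁻¹ * a * b) (by simp [SemiconjBy, mul_assoc])

theorem inv_mul_mul_pow (a b : G) (k : ℕ) : (b⁻¹ * a * b) ^ k = b⁻¹ * a ^ k * b := by
  simpa using conj_pow (a := b⁻¹) (b := a) (i := k)

theorem inv_mul_mul_pow_orderOf_div_two (a b : G) :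
    (b⁻¹ * a * b) ^ (orderOf (b⁻¹ * a * b) / 2) = b⁻¹ * a ^ (orderOf a / 2) * b := by
  rw [orderOf_inv_mul_mul, inv_mul_mul_pow]

theorem inv_pow_orderOf_div_two {w : G} (hw : Even (orderOf w)) :
    (w ^ (orderOf w / 2))⁻¹ = w ^ (orderOf w / 2) :=
  inv_eq_of_mul_eq_one_right <| by
    rw [← pow_add, ← two_mul, Nat.mul_div_cancel' hw.two_dvd, pow_orderOf_eq_one]

theorem semiconjBy_mul_inv_of_inv_eq_self {i j : G} (hi : i⁻¹ = i) (hj : j⁻¹ = j) :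
    SemiconjBy i (i * j) (i * j)⁻¹ := by
  have hii : i * i = 1 := mul_eq_one_iff_eq_inv.mpr hi.symm
  rw [SemiconjBy, mul_inv_rev, hj, inv_mul_cancel_right, ← mul_assoc, hii, one_mul]

theorem pow_orderOf_div_two_mem_centralizer {i j : G} (hi : i⁻¹ = i) (hj : j⁻¹ = j)
    (heven : Even (orderOf (i * j))) :
    (i * j) ^ (orderOf (i * j) / 2) ∈ Subgroup.centralizer {i} := by
  have hinv := (semiconjBy_mul_inv_of_inv_eq_self hi hj).pow_right (orderOf (i * j) / 2)
  rw [inv_pow, inv_pow_orderOf_div_two heven] at hinv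
  exact Subgroup.mem_centralizer_singleton_iff.mpr hinv.eq.symm

theorem orderOf_pow_mul_conj_div_two_and_mem_centralizer {i : G} (hi : orderOf i = 2) {x : G}
    (heven : Even (orderOf (i * (x⁻¹ * i * x)))) (hpos : 0 < orderOf (i * (x⁻¹ * i * x))) :
    orderOf ((i * (x⁻¹ * i * x)) ^ (orderOf (i * (x⁻¹ * i * x)) / 2)) = 2 ∧
      (i * (x⁻¹ * i * x)) ^ (orderOf (i * (x⁻¹ * i * x)) / 2) ∈ Subgroup.centralizer {i} := by
  have hi' := inv_eq_self_of_orderOf_eq_two hi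
  have hconj : (x⁻¹ * i * x)⁻¹ = x⁻¹ * i * x := by simp [mul_assoc, hi']
  exact ⟨orderOf_pow_orderOf_div hpos.ne' heven.two_dvd,
    pow_orderOf_div_two_mem_centralizer hi' hconj heven⟩

theorem Commute.mul_conj_mul_right {i c : G} (h : Commute i c) (x : G) :
    i * ((x * c)⁻¹ * i * (x * c)) = c⁻¹ * (i * (x⁻¹ * i * x)) * c := by
  calc i * ((x * c)⁻¹ * i * (x * c)) = (i * c⁻¹) * (x⁻¹ * i * x) * c := by group
    _ = (c⁻¹ * i) * (x⁻¹ * i * x) * c := by rw [h.inv_right.eq]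
    _ = c⁻¹ * (i * (x⁻¹ * i * x)) * c := by group

end

/-- Let `X` be a group, `i ∈ X` an involution, and `x ∈ X` such that
`w = i·i^x` has even order `n`.  Then `ζ₀(x) = w^{n/2}` is an involution lying in the
centralizer `C_X(i)`; moreover for every `c ∈ C_X(i)` one has `i·i^{xc} = w^c` and
`ζ₀(xc) = (ζ₀(x))^c`; in particular the set of all the elements `ζ₀(x)` is a normal
subset of involutions of `C_X(i)`. -/
theorem zeta0_normal_subset_of_involutions (X : Type*) [Group X] (i x : X)
    (hi : orderOf i = 2) (n : ℕ) (hn : orderOf (i * (x⁻¹ * i * x)) = n)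
    (hneven : Even n) (hnpos : 0 < n) :
    orderOf ((i * (x⁻¹ * i * x)) ^ (n / 2)) = 2 ∧
    (i * (x⁻¹ * i * x)) ^ (n / 2) ∈ Subgroup.centralizer ({i} : Set X) ∧
    (∀ c ∈ Subgroup.centralizer ({i} : Set X),
      i * ((x * c)⁻¹ * i * (x * c)) = c⁻¹ * (i * (x⁻¹ * i * x)) * c ∧
      (i * ((x * c)⁻¹ * i * (x * c))) ^ (orderOf (i * ((x * c)⁻¹ * i * (x * c))) / 2) =
        c⁻¹ * ((i * (x⁻¹ * i * x)) ^ (n / 2)) * c) ∧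
    (∀ y ∈ zeta0Set X i, orderOf y = 2 ∧ y ∈ Subgroup.centralizer ({i} : Set X)) ∧
    (∀ c ∈ Subgroup.centralizer ({i} : Set X), ∀ y ∈ zeta0Set X i,
      c⁻¹ * y * c ∈ zeta0Set X i) := by
  subst hn
  have hcomm {c : X} (hc : c ∈ Subgroup.centralizer ({i} : Set X)) : Commute i c :=
    (Subgroup.mem_centralizer_singleton_iff.mp hc).symm
  obtain ⟨hord, hcent⟩ := orderOf_pow_mul_conj_div_two_and_mem_centralizer hi hneven hnpos
  refine ⟨hord, hcent, fun c hc => ?_, ?_, ?_⟩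
  · rw [(hcomm hc).mul_conj_mul_right x, inv_mul_mul_pow_orderOf_div_two]
    exact ⟨rfl, rfl⟩
  · rintro y ⟨x', heven, hpos, rfl⟩
    exact orderOf_pow_mul_conj_div_two_and_mem_centralizer hi heven hpos
  · rintro c hc y ⟨x', heven, hpos, rfl⟩
    refine ⟨x' * c, ?_, ?_, ?_⟩ <;>
      rw [(hcomm hc).mul_conj_mul_right x', orderOf_inv_mul_mul]
    exacts [heven, hpos, (inv_mul_mul_pow _ c _).symm]
end

section
/- Let G = PSL₂(q), where q ≡ 1 mod 4 and q = p^k for some k ≥ 1 and odd prime p. If i ∈ G is an involution, then there exists g ∈ G such that i·i^g has order p. -/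
/-!
Lift `i` to `A ∈ SL₂(F)`. As `A²` is central but `A` is not, Cayley–Hamilton
`A² = (tr A) A - 1` forces `tr A = 0`. For the transvection `u = [[1, t], [0, 1]]` the product
`C = A · u⁻¹ A u` has trace `-2 - (c t)²`, where `c` is the lower-left entry of `A`. Since
`q ≡ 1 mod 4`, `-1 = s²` in `F`; taking `t = 2s / c` when `c ≠ 0` and `t = 1` when `c = 0`
makes `tr C = 2ε` with `ε = ±1` and `C` non-scalar. Then `(C - ε)² = 0`, so in characteristic
`p` we get `C^p = ε^p`, which is central: the image of `C` in `PSL₂(F)` has order `p`.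
-/

/-- `PSL₂(F)`: the quotient of `SL₂(F)` by its center. -/
abbrev PSL2 (F : Type*) [Field F] : Type _ :=
  Matrix.SpecialLinearGroup (Fin 2) F ⧸
    Subgroup.center (Matrix.SpecialLinearGroup (Fin 2) F)

open Matrix Subgroup
open scoped MatrixGroups

namespace Matrix

variable {R : Type*} [CommRing R]

theorem mul_self_eq_trace_smul_sub_det (M : Matrix (Fin 2) (Fin 2) R) :
    M * M = M.trace • M - M.det • 1 := by
  ext i j
  fin_cases i <;> fin_cases j <;>
    simp [mul_apply, trace_fin_two, det_fin_two] <;> ring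

theorem eta_fin_two_of_trace_eq_zero {M : Matrix (Fin 2) (Fin 2) R} (hM : M.trace = 0) :
    M = !![M 0 0, M 0 1; M 1 0, -M 0 0] := by
  rw [← eq_neg_of_add_eq_zero_right (trace_fin_two M ▸ hM)]
  exact eta_fin_two M

end Matrix

namespace Matrix.SpecialLinearGroup

section CommRing

variable {R : Type*} [CommRing R]

theorem coe_mul_self_eq_trace_smul_sub_one (A : SL(2, R)) :
    (A : Matrix (Fin 2) (Fin 2) R) * A = trace (A : Matrix (Fin 2) (Fin 2) R) • A - 1 := by
  rw [mul_self_eq_trace_smul_sub_det, A.det_coe, one_smul]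

def upperUnipotent (t : R) : SL(2, R) :=
  ⟨!![1, t; 0, 1], by simp [det_fin_two_of]⟩

@[simp]
theorem coe_upperUnipotent (t : R) :
    (upperUnipotent t : Matrix (Fin 2) (Fin 2) R) = !![1, t; 0, 1] :=
  rfl

theorem upperUnipotent_inv (t : R) : (upperUnipotent t)⁻¹ = upperUnipotent (-t) := by
  rw [SL2_inv_expl]
  ext i j
  fin_cases i <;> fin_cases j <;> simp [upperUnipotent]

theorem coe_mul_conj_upperUnipotent {A : SL(2, R)} {a b c : R}
    (hA : (A : Matrix (Fin 2) (Fin 2) R) = !![a, b; c, -a]) (t : R) :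
    ((A * ((upperUnipotent t)⁻¹ * A * upperUnipotent t) : SL(2, R)) : Matrix (Fin 2) (Fin 2) R) =
      !![-1 - a * c * t, t * (a ^ 2 - 1 - a * c * t);
        -(c ^ 2 * t), -1 + a * c * t - (c * t) ^ 2] := by
  have hdet : -a ^ 2 - b * c = 1 := by
    simpa [hA, det_fin_two_of, sq] using A.det_coe
  rw [upperUnipotent_inv, coe_mul, coe_mul, coe_mul, hA, coe_upperUnipotent,
    coe_upperUnipotent, mul_fin_two, mul_fin_two, mul_fin_two]
  ext i j
  fin_cases i <;> fin_cases j <;> simp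
  · linear_combination -hdet
  · linear_combination -t * hdet
  · ring
  · linear_combination -hdet

theorem trace_mul_conj_upperUnipotent {A : SL(2, R)} {a b c : R}
    (hA : (A : Matrix (Fin 2) (Fin 2) R) = !![a, b; c, -a]) (t : R) :
    trace ((A * ((upperUnipotent t)⁻¹ * A * upperUnipotent t) : SL(2, R)) :
      Matrix (Fin 2) (Fin 2) R) = -2 - (c * t) ^ 2 := by
  rw [coe_mul_conj_upperUnipotent hA, trace_fin_two_of]
  ring

theorem notMem_center_of_apply_ne_zero {A : SL(2, R)} {i j : Fin 2} (hij : i ≠ j)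
    (hA : (A : Matrix (Fin 2) (Fin 2) R) i j ≠ 0) : A ∉ center SL(2, R) := by
  rw [mem_center_iff]
  rintro ⟨r, -, hr⟩
  exact hA (by rw [← hr, scalar_apply, diagonal_apply_ne _ hij])

theorem mem_center_of_coe_eq_smul_one {A : SL(2, R)} {r : R}
    (hA : (A : Matrix (Fin 2) (Fin 2) R) = r • 1) : A ∈ center SL(2, R) :=
  mem_center_iff.mpr ⟨r, by simpa [hA, sq] using A.det_coe, by simp [hA, smul_one_eq_diagonal]⟩

end CommRing

section Field

variable {F : Type*} [Field F]

theorem trace_eq_zero_of_sq_mem_center {A : SL(2, F)} (hA : A ∉ center SL(2, F))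
    (hA2 : A ^ 2 ∈ center SL(2, F)) : trace (A : Matrix (Fin 2) (Fin 2) F) = 0 := by
  obtain ⟨r, -, hr⟩ := mem_center_iff.mp hA2
  by_contra htr
  have hA_scalar : trace (A : Matrix (Fin 2) (Fin 2) F) • (A : Matrix (Fin 2) (Fin 2) F) =
      (r + 1) • 1 := by
    rw [add_smul, one_smul, smul_one_eq_diagonal, ← scalar_apply, hr, coe_pow, sq,
      coe_mul_self_eq_trace_smul_sub_one, sub_add_cancel]
  refine hA (mem_center_of_coe_eq_smul_one
    (r := (trace (A : Matrix (Fin 2) (Fin 2) F))⁻¹ * (r + 1)) ?_)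
  rw [mul_smul, ← hA_scalar, smul_smul, inv_mul_cancel₀ htr, one_smul]

theorem trace_eq_zero_of_orderOf_mk_eq_two {A : SL(2, F)} (hA : orderOf (A : PSL2 F) = 2) :
    trace (A : Matrix (Fin 2) (Fin 2) F) = 0 := by
  refine trace_eq_zero_of_sq_mem_center ?_ ?_
  · rw [← QuotientGroup.eq_one_iff]
    intro h
    simp [h] at hA
  · rw [← QuotientGroup.eq_one_iff, QuotientGroup.mk_pow]
    simpa [hA] using pow_orderOf_eq_one (A : PSL2 F)

theorem orderOf_mk_eq_of_trace_eq_two_mul {p : ℕ} [Fact p.Prime] [CharP F p] {C : SL(2, F)}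
    {ε : F} (hε : ε ^ 2 = 1) (htr : trace (C : Matrix (Fin 2) (Fin 2) F) = 2 * ε)
    (hC : C ∉ center SL(2, F)) : orderOf (C : PSL2 F) = p := by
  set N := (C : Matrix (Fin 2) (Fin 2) F) - scalar (Fin 2) ε
  have hN : N ^ 2 = 0 := by
    have hC2 := coe_mul_self_eq_trace_smul_sub_one C
    rw [htr] at hC2
    simp only [N, sq, scalar_apply, ← smul_one_eq_diagonal, sub_mul, mul_sub, smul_mul_assoc,
      mul_smul_comm, one_mul, mul_one, hC2]
    linear_combination (norm := module) hε • (1 : Matrix (Fin 2) (Fin 2) F)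
  have hCp : C ^ p ∈ center SL(2, F) := by
    refine mem_center_iff.mpr
      ⟨ε ^ p, by rw [Fintype.card_fin, ← pow_mul, mul_comm, pow_mul, hε, one_pow], ?_⟩
    have hcomm : Commute (scalar (Fin 2) ε) N := scalar_commute ε (Commute.all ε) N
    rw [coe_pow, ← add_sub_cancel (scalar (Fin 2) ε) (C : Matrix (Fin 2) (Fin 2) F),
      add_pow_char_of_commute p hcomm, pow_eq_zero_of_le (Fact.out : p.Prime).two_le hN,
      add_zero, map_pow]
  refine orderOf_eq_prime ?_ ?_
  · rw [← QuotientGroup.mk_pow, QuotientGroup.eq_one_iff]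
    exact hCp
  · rwa [Ne, QuotientGroup.eq_one_iff]

theorem exists_trace_mul_conj_eq_two_mul {s : F} (hs : s * s = -1) (h2 : (2 : F) ≠ 0)
    {A : SL(2, F)} (hA : trace (A : Matrix (Fin 2) (Fin 2) F) = 0) :
    ∃ B : SL(2, F), ∃ ε : F, ε ^ 2 = 1 ∧
      trace ((A * (B⁻¹ * A * B) : SL(2, F)) : Matrix (Fin 2) (Fin 2) F) = 2 * ε ∧
      A * (B⁻¹ * A * B) ∉ center SL(2, F) := by
  have hA_eta := eta_fin_two_of_trace_eq_zero hA
  set a := (A : Matrix (Fin 2) (Fin 2) F) 0 0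
  set c := (A : Matrix (Fin 2) (Fin 2) F) 1 0
  by_cases hc : c = 0
  · have ha : a ^ 2 = -1 := by
      have hdet := A.det_coe
      rw [hA_eta, det_fin_two_of, hc] at hdet
      linear_combination -hdet
    refine ⟨upperUnipotent 1, -1, by norm_num, ?_,
      notMem_center_of_apply_ne_zero zero_ne_one ?_⟩
    · rw [trace_mul_conj_upperUnipotent hA_eta, hc]
      ring
    · rw [coe_mul_conj_upperUnipotent hA_eta, hc, ha]
      simp only [of_apply, cons_val', cons_val_zero, cons_val_one, empty_val', cons_val_fin_one]
      intro h
      exact h2 (by linear_combination -h)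
  · have hct : c * (2 * s / c) = 2 * s := mul_div_cancel₀ _ hc
    refine ⟨upperUnipotent (2 * s / c), 1, one_pow 2, ?_,
      notMem_center_of_apply_ne_zero one_ne_zero ?_⟩
    · rw [trace_mul_conj_upperUnipotent hA_eta, hct]
      linear_combination -4 * hs
    · rw [coe_mul_conj_upperUnipotent hA_eta]
      simp only [of_apply, cons_val', cons_val_zero, cons_val_one, empty_val', cons_val_fin_one]
      rw [sq, mul_assoc, hct]
      have hs0 : s ≠ 0 := by
        rintro rfl
        simp at hs
      exact neg_ne_zero.mpr (mul_ne_zero hc (mul_ne_zero h2 hs0))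

end Field
end Matrix.SpecialLinearGroup

theorem exists_unipotent_product_of_involutions_general (p k q : ℕ) (hp : p.Prime)
    (hq : q = p ^ k) (hq4 : q % 4 = 1)
    (F : Type*) [Field F] [Fintype F] (hF : Fintype.card F = q)
    (i : PSL2 F) (hi : orderOf i = 2) :
    ∃ g : PSL2 F, orderOf (i * (g⁻¹ * i * g)) = p := by
  have := Fact.mk hp
  have : CharP F p := charP_of_card_eq_prime_pow (hF.trans hq)
  have h2 : (2 : F) ≠ 0 :=
    Ring.two_ne_zero (mt FiniteField.even_card_iff_char_two.mp (by omega))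
  obtain ⟨s, hs⟩ := FiniteField.isSquare_neg_one_iff.mpr (by omega : Fintype.card F % 4 ≠ 3)
  obtain ⟨A, rfl⟩ := QuotientGroup.mk_surjective i
  obtain ⟨B, ε, hε, htr, hC⟩ :=
    SpecialLinearGroup.exists_trace_mul_conj_eq_two_mul hs.symm h2
      (SpecialLinearGroup.trace_eq_zero_of_orderOf_mk_eq_two hi)
  refine ⟨B, ?_⟩
  simpa using SpecialLinearGroup.orderOf_mk_eq_of_trace_eq_two_mul hε htr hC

/-- Let `G = PSL₂(q)`, `q ≡ 1 mod 4`, `q = p^k`, `p` an odd prime,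
`k ≥ 1`.  If `i ∈ G` is an involution then there is `g ∈ G` such that `i·i^g` has
order `p`. -/
theorem exists_unipotent_product_of_involutions (p k q : ℕ) (hp : p.Prime) (hpodd : Odd p)
    (hk : 1 ≤ k) (hq : q = p ^ k) (hq4 : q % 4 = 1)
    (F : Type*) [Field F] [Fintype F] (hF : Fintype.card F = q)
    (i : PSL2 F) (hi : orderOf i = 2) :
    ∃ g : PSL2 F, orderOf (i * (g⁻¹ * i * g)) = p :=
  exists_unipotent_product_of_involutions_general p k q hp hq hq4 F hF i hi
end

section
/- Let G = PSL₂(q), where q ≡ 1 mod 4 and q = p^k for some k ≥ 1 and odd prime p, and let i ∈ G be an involution. Then the number of involutions j ∈ G such that the product i·j has order p is exactly 2(q−1). -/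
open Matrix
open scoped MatrixGroups

theorem ncard_setOf_fst_mul_snd_eq_zero_and_ne_zero {M₀ : Type*} [MulZeroClass M₀]
    [NoZeroDivisors M₀] [Fintype M₀] :
    {v : M₀ × M₀ | v.1 * v.2 = 0 ∧ v ≠ 0}.ncard = 2 * (Fintype.card M₀ - 1) := by
  have hset :
      {v : M₀ × M₀ | v.1 * v.2 = 0 ∧ v ≠ 0} = ({0} ×ˢ {0}ᶜ) ∪ ({0}ᶜ ×ˢ {0}) := by
    ext ⟨x, y⟩
    simp only [Set.mem_ofPred_eq, mul_eq_zero, ne_eq, Prod.mk_eq_zero, Set.mem_union,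
      Set.mem_prod, Set.mem_singleton_iff, Set.mem_compl_iff]
    tauto
  have hdisj : Disjoint ({(0 : M₀)} ×ˢ ({0}ᶜ : Set M₀)) ({0}ᶜ ×ˢ {0}) :=
    Set.disjoint_left.mpr fun v hv hv' => hv'.1 hv.1
  rw [hset, Set.ncard_union_eq hdisj, Set.ncard_prod, Set.ncard_prod, Set.ncard_singleton,
    Set.ncard_compl, Set.ncard_singleton, Nat.card_eq_fintype_card]
  ring

theorem MulEquiv.ncard_setOf_orderOf_mul {G H : Type*} [Monoid G] [Monoid H] (φ : G ≃* H)
    (a : G) (m n : ℕ) :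
    {j : H | orderOf j = m ∧ orderOf (φ a * j) = n}.ncard =
      {j : G | orderOf j = m ∧ orderOf (a * j) = n}.ncard := by
  rw [← Set.ncard_image_of_injective _ φ.injective]
  congr 1
  ext j
  obtain ⟨j, rfl⟩ := φ.surjective j
  rw [φ.injective.mem_set_image, Set.mem_ofPred, Set.mem_ofPred, ← map_mul, MulEquiv.orderOf_eq,
    MulEquiv.orderOf_eq]

namespace Matrix.SpecialLinearGroup

section CommRing

variable {R : Type*} [CommRing R]

theorem SL2_det_eq (A : SL(2, R)) : A 0 0 * A 1 1 - A 0 1 * A 1 0 = 1 := by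
  rw [← Matrix.det_fin_two]; exact A.2

theorem SL2_mul_apply (A B : SL(2, R)) (i j : Fin 2) :
    (A * B) i j = A i 0 * B 0 j + A i 1 * B 1 j := by
  rw [coe_mul, mul_apply, Fin.sum_univ_two]

theorem SL2_coe_mul_self (A : SL(2, R)) :
    (A : Matrix (Fin 2) (Fin 2) R) * A =
      trace (A : Matrix (Fin 2) (Fin 2) R) • (A : Matrix (Fin 2) (Fin 2) R) - 1 := by
  have hdet := SL2_det_eq A
  ext i j
  fin_cases i <;> fin_cases j <;>
    simp only [mul_apply, Fin.sum_univ_two, trace_fin_two, sub_apply, smul_apply, one_apply] <;>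
    simp <;> first | ring1 | linear_combination -hdet

theorem SL2_mul_self_eq_neg_one_iff (A : SL(2, R)) :
    A * A = -1 ↔ trace (A : Matrix (Fin 2) (Fin 2) R) = 0 := by
  refine Subtype.ext_iff.trans ?_
  rw [coe_mul, SL2_coe_mul_self, coe_neg, coe_one, sub_eq_neg_self]
  refine ⟨fun h => ?_, fun h => by rw [h, zero_smul]⟩
  have e := fun i j => congrFun (congrFun h i) j
  simp only [smul_apply, smul_eq_mul, zero_apply] at e
  linear_combination
    A 1 1 * e 0 0 - A 1 0 * e 0 1 - trace (A : Matrix (Fin 2) (Fin 2) R) * SL2_det_eq A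

theorem SL2_one_ne_neg_one (h2 : (2 : R) ≠ 0) : (1 : SL(2, R)) ≠ -1 := fun h =>
  h2 (by simpa [one_add_one_eq_two] using congrArg (fun A : SL(2, R) => A 0 0 + 1) h)

def diagSqrtNegOne {u : R} (hu : u * u = -1) : SL(2, R) :=
  ⟨!![u, 0; 0, -u], by rw [det_fin_two_of]; linear_combination -hu⟩

theorem trace_diagSqrtNegOne_mul {u : R} (hu : u * u = -1) (A : SL(2, R)) :
    trace ((diagSqrtNegOne hu * A : SL(2, R)) : Matrix (Fin 2) (Fin 2) R) =
      u * (A 0 0 - A 1 1) := by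
  rw [trace_fin_two, SL2_mul_apply, SL2_mul_apply]
  simp [diagSqrtNegOne]
  ring

theorem diagSqrtNegOne_mul_self {u : R} (hu : u * u = -1) :
    diagSqrtNegOne hu * diagSqrtNegOne hu = -1 :=
  (SL2_mul_self_eq_neg_one_iff _).mpr (by simp [diagSqrtNegOne, trace_fin_two])

theorem diagSqrtNegOne_neg {u : R} (hu : u * u = -1) :
    diagSqrtNegOne (u := -u) (by linear_combination hu) = -diagSqrtNegOne hu := by
  ext i j; rw [coe_neg]; fin_cases i <;> fin_cases j <;> simp [diagSqrtNegOne]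

def triangularUnipotent (v : R × R) (hv : v.1 * v.2 = 0) : SL(2, R) :=
  ⟨!![1, v.1; v.2, 1], by rw [det_fin_two_of]; linear_combination -hv⟩

end CommRing

section Domain

variable {R : Type*} [CommRing R] [NoZeroDivisors R]

theorem SL2_mem_center_iff {A : SL(2, R)} :
    A ∈ Subgroup.center SL(2, R) ↔ A = 1 ∨ A = -1 := by
  rw [mem_center_iff, Fintype.card_fin]
  constructor
  · rintro ⟨r, hr, hA⟩
    rcases sq_eq_one_iff.mp hr with rfl | rfl
    · left; ext1; rw [← hA, map_one]; rfl
    · right; ext1; rw [← hA, map_neg, map_one]; rfl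
  · rintro (rfl | rfl)
    · exact ⟨1, one_pow 2, map_one _⟩
    · exact ⟨-1, by norm_num, by rw [map_neg, map_one]; rfl⟩

theorem SL2_eq_one_or_eq_neg_one_of_mul_self_eq_one (h2 : (2 : R) ≠ 0) {A : SL(2, R)}
    (h : A * A = 1) : A = 1 ∨ A = -1 := by
  have e := (ext_iff _ _).mp (inv_eq_of_mul_eq_one_right h)
  simp only [SL2_inv_expl] at e
  have e01 := e 0 1
  have e10 := e 1 0
  have e11 := e 1 1
  simp only [cons_val', cons_val_zero, cons_val_one, empty_val', cons_val_fin_one] at e01 e10 e11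
  have hb : A 0 1 = 0 := by simpa [h2] using (by linear_combination -e01 : 2 * A 0 1 = 0)
  have hc : A 1 0 = 0 := by simpa [h2] using (by linear_combination -e10 : 2 * A 1 0 = 0)
  have ha : A 0 0 ^ 2 = 1 := by linear_combination SL2_det_eq A + A 0 0 * e11 + A 0 1 * hc
  rcases sq_eq_one_iff.mp ha with ha | ha
  · left; ext i j; fin_cases i <;> fin_cases j <;> simp [ha, hb, hc, ← e11]
  · right; ext i j; fin_cases i <;> fin_cases j <;> simp [ha, hb, hc, ← e11]

end Domain

section CharP

variable {R : Type*} [CommRing R] [IsReduced R] (p : ℕ) [Fact p.Prime] [CharP R p]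

theorem SL2_pow_char_eq_one_iff (A : SL(2, R)) :
    A ^ p = 1 ↔ trace (A : Matrix (Fin 2) (Fin 2) R) = 2 := by
  have hsub : ((A : Matrix (Fin 2) (Fin 2) R) - 1) ^ p = (A ^ p : SL(2, R)) - 1 := by
    rw [sub_pow_char_of_commute p (Commute.one_right _), one_pow, coe_pow]
  refine Subtype.ext_iff.trans ?_
  rw [coe_one, ← sub_eq_zero, ← hsub]
  constructor
  · intro h
    have := (Matrix.isNilpotent_trace_of_isNilpotent ⟨p, h⟩).eq_zero
    rw [trace_sub, trace_one, Fintype.card_fin, sub_eq_zero] at this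
    exact_mod_cast this
  · intro h
    have hsq : ((A : Matrix (Fin 2) (Fin 2) R) - 1) ^ 2 = 0 := by
      rw [sq, sub_mul, mul_sub, SL2_coe_mul_self, h, two_smul, one_mul, mul_one]
      abel
    exact pow_eq_zero_of_le (Fact.out : p.Prime).two_le hsq

variable {p} in
theorem SL2_pow_char_eq_neg_one_iff (hp : Odd p) (A : SL(2, R)) :
    A ^ p = -1 ↔ trace (A : Matrix (Fin 2) (Fin 2) R) = -2 := by
  rw [← neg_eq_iff_eq_neg, ← hp.neg_pow, SL2_pow_char_eq_one_iff p, coe_neg, trace_neg,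
    neg_eq_iff_eq_neg]

end CharP

section Field

variable {F : Type*} [Field F]

-- `P` has columns `s (A + u) e₀` and `(A - u) e₁`, eigenvectors of `A` for `u` and `-u` since
-- `(A - u)(A + u) = A² + 1 = 0`; without `s` the determinant is `2 (1 - A₀₀ u)`.
theorem isConj_diagSqrtNegOne (h2 : (2 : F) ≠ 0) {u : F} (hu : u * u = -1) {A : SL(2, F)}
    (hA : trace (A : Matrix (Fin 2) (Fin 2) F) = 0) (hAu : A 0 0 * u ≠ 1) :
    IsConj (diagSqrtNegOne hu) A := by
  have hd : A 1 1 = -A 0 0 := by rw [trace_fin_two] at hA; linear_combination hA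
  have hdet : -A 0 0 * A 0 0 - A 0 1 * A 1 0 = 1 := by
    rw [← hd]; linear_combination SL2_det_eq A
  obtain ⟨s, hs⟩ : ∃ s : F, s * (2 * (1 - A 0 0 * u)) = 1 :=
    ⟨_, inv_mul_cancel₀ (mul_ne_zero h2 (sub_ne_zero.mpr (Ne.symm hAu)))⟩
  let P : SL(2, F) := ⟨!![s * (A 0 0 + u), A 0 1; s * A 1 0, -A 0 0 - u], by
    rw [det_fin_two_of]; linear_combination s * hdet - s * hu + hs⟩
  refine isConj_iff.mpr ⟨P, mul_inv_eq_of_eq_mul ?_⟩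
  ext i j
  fin_cases i <;> fin_cases j <;>
    simp only [SL2_mul_apply] <;> simp [P, diagSqrtNegOne, hd] <;>
    first | ring1 | linear_combination s * hu + s * hdet | linear_combination hu + hdet

theorem exists_triangularUnipotent_eq (h2 : (2 : F) ≠ 0) {u : F} (hu : u * u = -1)
    {M : SL(2, F)} (htr : trace (M : Matrix (Fin 2) (Fin 2) F) = 2)
    (hD : trace ((diagSqrtNegOne hu * M : SL(2, F)) : Matrix (Fin 2) (Fin 2) F) = 0) :
    ∃ hv : M 0 1 * M 1 0 = 0, triangularUnipotent (M 0 1, M 1 0) hv = M := by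
  have hu0 : u ≠ 0 := by rintro rfl; simp at hu
  rw [trace_diagSqrtNegOne_mul, mul_eq_zero, sub_eq_zero] at hD
  have hd := hD.resolve_left hu0
  have ha : M 0 0 = 1 := by
    rw [trace_fin_two, ← hd] at htr
    exact (mul_right_inj' h2).mp (by linear_combination htr)
  have hdet := SL2_det_eq M
  refine ⟨by rw [← hd, ha] at hdet; linear_combination -hdet, ?_⟩
  ext i j; fin_cases i <;> fin_cases j <;> simp [triangularUnipotent, ha, ← hd]

end Field

end Matrix.SpecialLinearGroup

namespace PSL2

open Matrix.SpecialLinearGroup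

variable {F : Type*} [Field F]

theorem coe_eq_one_iff {A : SL(2, F)} : (A : PSL2 F) = 1 ↔ A = 1 ∨ A = -1 := by
  rw [QuotientGroup.eq_one_iff, SL2_mem_center_iff]

theorem coe_eq_coe_iff {A B : SL(2, F)} : (A : PSL2 F) = B ↔ A = B ∨ A = -B := by
  rw [QuotientGroup.eq, SL2_mem_center_iff, inv_mul_eq_one, inv_mul_eq_iff_eq_mul, mul_neg_one,
    eq_comm (a := B), neg_eq_iff_eq_neg]

@[simp]
theorem coe_neg (A : SL(2, F)) : ((-A : SL(2, F)) : PSL2 F) = A :=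
  coe_eq_coe_iff.mpr (Or.inr rfl)

theorem orderOf_coe_eq_two_iff (h2 : (2 : F) ≠ 0) (A : SL(2, F)) :
    orderOf (A : PSL2 F) = 2 ↔ trace (A : Matrix (Fin 2) (Fin 2) F) = 0 := by
  have := Fact.mk Nat.prime_two
  simp only [orderOf_eq_prime_iff, sq, ← QuotientGroup.mk_mul, ne_eq, coe_eq_one_iff,
    ← SL2_mul_self_eq_neg_one_iff]
  refine ⟨fun ⟨hsq, hA⟩ => hsq.resolve_left fun h =>
    hA (SL2_eq_one_or_eq_neg_one_of_mul_self_eq_one h2 h), fun h => ⟨Or.inr h, ?_⟩⟩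
  rintro (rfl | rfl) <;> simp only [mul_one, neg_mul_neg] at h <;>
    exact SL2_one_ne_neg_one h2 h

theorem orderOf_coe_eq_char_iff {p : ℕ} [Fact p.Prime] [CharP F p] (hp : Odd p)
    (A : SL(2, F)) :
    orderOf (A : PSL2 F) = p ↔
      (trace (A : Matrix (Fin 2) (Fin 2) F) = 2 ∨ trace (A : Matrix (Fin 2) (Fin 2) F) = -2) ∧
        (A : PSL2 F) ≠ 1 := by
  simp only [orderOf_eq_prime_iff, ← QuotientGroup.mk_pow, coe_eq_one_iff,
    SL2_pow_char_eq_one_iff p, SL2_pow_char_eq_neg_one_iff hp]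

theorem exists_coe_eq_and_trace_eq_two {p : ℕ} [Fact p.Prime] [CharP F p] (hp : Odd p)
    {x : PSL2 F} (hx : orderOf x = p) :
    ∃ M : SL(2, F), (M : PSL2 F) = x ∧ trace (M : Matrix (Fin 2) (Fin 2) F) = 2 := by
  obtain ⟨M, rfl⟩ := QuotientGroup.mk_surjective x
  rcases ((orderOf_coe_eq_char_iff hp M).mp hx).1 with h | h
  · exact ⟨M, rfl, h⟩
  · exact ⟨-M, coe_neg M, by rw [Matrix.SpecialLinearGroup.coe_neg, trace_neg, h, neg_neg]⟩

theorem isConj_coe_diagSqrtNegOne (h2 : (2 : F) ≠ 0) {u : F} (hu : u * u = -1) {A : SL(2, F)}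
    (hA : trace (A : Matrix (Fin 2) (Fin 2) F) = 0) :
    IsConj (diagSqrtNegOne hu : PSL2 F) A := by
  by_cases hAu : A 0 0 * u = 1
  · have hAu' : A 0 0 * -u ≠ 1 := fun h => h2 (by linear_combination -hAu - h)
    rw [← coe_neg (diagSqrtNegOne hu), ← diagSqrtNegOne_neg hu]
    exact (QuotientGroup.mk' _).map_isConj (isConj_diagSqrtNegOne h2 _ hA hAu')
  · exact (QuotientGroup.mk' _).map_isConj (isConj_diagSqrtNegOne h2 hu hA hAu)

theorem coe_diagSqrtNegOne_mul_self {u : F} (hu : u * u = -1) :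
    (diagSqrtNegOne hu : PSL2 F) * diagSqrtNegOne hu = 1 := by
  rw [← QuotientGroup.mk_mul, diagSqrtNegOne_mul_self, coe_neg, QuotientGroup.mk_one]

theorem orderOf_coe_diagSqrtNegOne_mul_triangularUnipotent (h2 : (2 : F) ≠ 0) {u : F}
    (hu : u * u = -1) (v : F × F) (hv : v.1 * v.2 = 0) :
    orderOf ((diagSqrtNegOne hu : PSL2 F) * triangularUnipotent v hv) = 2 := by
  rw [← QuotientGroup.mk_mul, orderOf_coe_eq_two_iff h2, trace_diagSqrtNegOne_mul]
  simp [triangularUnipotent]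

theorem orderOf_coe_triangularUnipotent {p : ℕ} [Fact p.Prime] [CharP F p] (hp : Odd p)
    (h2 : (2 : F) ≠ 0) {v : F × F} (hv : v.1 * v.2 = 0) (hv0 : v ≠ 0) :
    orderOf (triangularUnipotent v hv : PSL2 F) = p := by
  refine (orderOf_coe_eq_char_iff hp _).mpr ⟨Or.inl ?_, ?_⟩
  · simp [triangularUnipotent, trace_fin_two, one_add_one_eq_two]
  rw [Ne, coe_eq_one_iff]
  rintro (h | h) <;> have e := (Matrix.SpecialLinearGroup.ext_iff _ _).mp h
  · exact hv0 (Prod.ext (by simpa [triangularUnipotent] using e 0 1)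
      (by simpa [triangularUnipotent] using e 1 0))
  · have e00 := e 0 0
    simp [triangularUnipotent] at e00
    exact h2 (by linear_combination e00)

theorem eq_of_coe_triangularUnipotent_eq (h2 : (2 : F) ≠ 0) {v w : F × F} (hv : v.1 * v.2 = 0)
    (hw : w.1 * w.2 = 0) (h : (triangularUnipotent v hv : PSL2 F) = triangularUnipotent w hw) :
    v = w := by
  rcases coe_eq_coe_iff.mp h with h | h
  · have e := (Matrix.SpecialLinearGroup.ext_iff _ _).mp h
    exact Prod.ext (by simpa [triangularUnipotent] using e 0 1)
      (by simpa [triangularUnipotent] using e 1 0)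
  · have e00 := (Matrix.SpecialLinearGroup.ext_iff _ _).mp h 0 0
    rw [Matrix.SpecialLinearGroup.coe_neg] at e00
    simp [triangularUnipotent] at e00
    exact absurd (by linear_combination e00) h2

theorem ncard_involutions_mul_coe_diagSqrtNegOne {p : ℕ} [Fact p.Prime] [CharP F p] [Fintype F]
    (hp : Odd p) (h2 : (2 : F) ≠ 0) {u : F} (hu : u * u = -1) :
    {j : PSL2 F | orderOf j = 2 ∧ orderOf ((diagSqrtNegOne hu : PSL2 F) * j) = p}.ncard =
      2 * (Fintype.card F - 1) := by
  set D : PSL2 F := ↑(diagSqrtNegOne hu)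
  rw [← ncard_setOf_fst_mul_snd_eq_zero_and_ne_zero]
  refine (Set.ncard_congr (fun v hv => D * (triangularUnipotent v hv.1 : PSL2 F)) ?_ ?_ ?_).symm
  · rintro v ⟨hv, hv0⟩
    refine ⟨orderOf_coe_diagSqrtNegOne_mul_triangularUnipotent h2 hu v hv, ?_⟩
    rw [← mul_assoc, coe_diagSqrtNegOne_mul_self, one_mul]
    exact orderOf_coe_triangularUnipotent hp h2 hv hv0
  · rintro v w ⟨hv, _⟩ ⟨hw, _⟩ h
    exact eq_of_coe_triangularUnipotent_eq h2 hv hw (mul_left_cancel h)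
  · rintro j ⟨hj2, hjp⟩
    obtain ⟨M, hM, htr⟩ := exists_coe_eq_and_trace_eq_two hp hjp
    have hM1 := ((orderOf_coe_eq_char_iff hp M).mp (hM ▸ hjp)).2
    have hj : j = D * (M : PSL2 F) := by
      rw [hM, ← mul_assoc, coe_diagSqrtNegOne_mul_self, one_mul]
    have hD := (orderOf_coe_eq_two_iff h2 _).mp (by rw [QuotientGroup.mk_mul, ← hj]; exact hj2)
    obtain ⟨hv, hU⟩ := exists_triangularUnipotent_eq h2 hu htr hD
    refine ⟨(M 0 1, M 1 0), ⟨hv, fun h0 => hM1 (coe_eq_one_iff.mpr (Or.inl ?_))⟩,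
      by rw [hU, hj]⟩
    obtain ⟨h01, h10⟩ := Prod.mk_eq_zero.mp h0
    rw [← hU]
    ext i j; fin_cases i <;> fin_cases j <;> simp [triangularUnipotent, h01, h10]

end PSL2

theorem card_involutions_with_unipotent_product_general (p k q : ℕ) (hp : p.Prime) (hpodd : Odd p)
    (hq : q = p ^ k) (hq4 : q % 4 = 1)
    (F : Type*) [Field F] [Fintype F] (hF : Fintype.card F = q)
    (i : PSL2 F) (hi : orderOf i = 2) :
    Set.ncard {j : PSL2 F | orderOf j = 2 ∧ orderOf (i * j) = p} = 2 * (q - 1) := by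
  have := Fact.mk hp
  have : CharP F p := charP_of_card_eq_prime_pow (hF.trans hq)
  have h2 : (2 : F) ≠ 0 :=
    Ring.two_ne_zero (by rw [ringChar.eq F p]; rintro rfl; exact absurd hpodd (by decide))
  obtain ⟨u, hu⟩ := FiniteField.isSquare_neg_one_iff.mpr (by omega : Fintype.card F % 4 ≠ 3)
  obtain ⟨A, rfl⟩ := QuotientGroup.mk_surjective i
  obtain ⟨c, hc⟩ := isConj_iff.mp <|
    PSL2.isConj_coe_diagSqrtNegOne h2 hu.symm ((PSL2.orderOf_coe_eq_two_iff h2 A).mp hi)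
  rw [← hc, ← MulAut.conj_apply, MulEquiv.ncard_setOf_orderOf_mul,
    PSL2.ncard_involutions_mul_coe_diagSqrtNegOne hpodd h2, hF]

/-- Let `G = PSL₂(q)`, `q ≡ 1 mod 4`, `q = p^k`, `p` an odd prime,
`k ≥ 1`, and let `i ∈ G` be an involution.  Then the number of involutions `j ∈ G`
with `i·j` of order `p` is exactly `2(q-1)`. -/
theorem card_involutions_with_unipotent_product (p k q : ℕ) (hp : p.Prime) (hpodd : Odd p)
    (hk : 1 ≤ k) (hq : q = p ^ k) (hq4 : q % 4 = 1)
    (F : Type*) [Field F] [Fintype F] (hF : Fintype.card F = q)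
    (i : PSL2 F) (hi : orderOf i = 2) :
    Set.ncard {j : PSL2 F | orderOf j = 2 ∧ orderOf (i * j) = p} = 2 * (q - 1) :=
  card_involutions_with_unipotent_product_general p k q hp hpodd hq hq4 F hF i hi
end

section
/- Let G = PSL₂(q), where q ≡ 1 mod 4 and q = p^k for some odd prime p. Let T₁ and T₂ be cyclic subgroups of G each of cardinality (q−1)/2, and let i₁ ∈ T₁ and i₂ ∈ T₂ be involutions. Assume the product i₁·i₂ has odd order m, and set z = (i₁·i₂)^{(m+1)/2}. Then z^{-1} T₁ z = T₂. -/
/-!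
Since `i₁` inverts `x = i₁ i₂` and `z² = x ^ (m + 1) = x`, conjugation by `z⁻¹` sends `i₁` to
`i₁ z² = i₂`. So `z⁻¹ T₁ z` is a cyclic subgroup of order `(q - 1) / 2` containing `i₂`, and it is
enough to see that there is only one such subgroup.

Lift `i₂` to `A ∈ SL₂(F)`; then `tr A = 0`, so `A² = -1`. As `q ≡ 1 mod 4` there is `a` with
`a² = -1`, and `J = a A` is a reflection. With `P, Q` the eigenprojections of `J`,
`u ↦ u P + u⁻¹ Q` embeds `Fˣ` in `SL₂(F)`, and since `-1` maps to the centre its image `D` in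
`PSL₂(F)` has at most `(q - 1) / 2` elements. A generator `g` of a cyclic subgroup through `i₂`
commutes with `i₂`, so a lift `B` of `g` commutes or anticommutes with `A`. Anticommuting forces
`tr B = 0`, hence `g² = 1` and the subgroup is `⟨i₂⟩`; commuting puts `B` in `F[A] ∩ SL₂(F)`,
which is the torus. So the subgroup lies in `D`, and equals it by counting.
-/

open Matrix
open scoped MatrixGroups

theorem MulAut.conj_inv_pow_half_mul_eq {G : Type*} [Group G] {i₁ i₂ : G} (h₁ : i₁⁻¹ = i₁)
    (h₂ : i₂⁻¹ = i₂) {m : ℕ} (hm : (i₁ * i₂) ^ m = 1) (hmodd : Odd m) :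
    MulAut.conj ((i₁ * i₂) ^ ((m + 1) / 2))⁻¹ i₁ = i₂ := by
  set z := (i₁ * i₂) ^ ((m + 1) / 2)
  have hsq : i₁ * i₁ = 1 := mul_eq_one_iff_eq_inv.mpr h₁.symm
  have hinv : i₁ * (i₁ * i₂) * i₁⁻¹ = (i₁ * i₂)⁻¹ := by
    rw [_root_.mul_inv_rev, h₁, h₂, ← mul_assoc, hsq, one_mul]
  have hz : i₁ * z * i₁⁻¹ = z⁻¹ := by rw [← conj_pow, hinv, inv_pow]
  have hzz : z * z = i₁ * i₂ := by
    rw [← pow_add, ← Nat.two_mul, Nat.two_mul_div_two_of_even hmodd.add_one, pow_succ, hm,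
      one_mul]
  calc MulAut.conj z⁻¹ i₁ = (i₁ * z * i₁⁻¹) * i₁ * z := by simp [hz]
    _ = i₁ * (z * z) := by group
    _ = i₂ := by rw [hzz, ← mul_assoc, hsq, one_mul]

namespace Matrix

variable {R : Type*} [CommRing R]

theorem fin_two_mul_self (A : Matrix (Fin 2) (Fin 2) R) : A * A = A.trace • A - A.det • 1 := by
  ext i j
  fin_cases i <;> fin_cases j <;> simp [mul_apply, trace_fin_two, det_fin_two] <;> ring

theorem det_fin_two_smul_one_add_smul (x y : R) (A : Matrix (Fin 2) (Fin 2) R) :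
    (x • 1 + y • A).det = x ^ 2 + x * y * A.trace + y ^ 2 * A.det := by
  simp [det_fin_two, trace_fin_two]
  ring

theorem two_det_smul_eq_of_commute {A B : Matrix (Fin 2) (Fin 2) R} (htr : A.trace = 0)
    (h : A * B = B * A) :
    (2 * A.det) • B = (A.det * B.trace) • 1 - (A * B).trace • A := by
  have hd : A 1 1 = -A 0 0 := by rw [trace_fin_two] at htr; linear_combination htr
  have e00 := congrFun (congrFun h 0) 0
  have e01 := congrFun (congrFun h 0) 1
  have e10 := congrFun (congrFun h 1) 0
  simp only [mul_apply, Fin.sum_univ_two, hd] at e00 e01 e10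
  ext i j
  fin_cases i <;> fin_cases j <;> simp [mul_apply, trace_fin_two, det_fin_two, hd]
  · linear_combination A 0 0 * e00 + A 1 0 * e01
  · linear_combination A 0 1 * e00 - A 0 0 * e01
  · linear_combination A 0 0 * e10 - A 1 0 * e00
  · linear_combination -(A 0 0 * e00 + A 1 0 * e01)

theorem trace_eq_zero_of_mul_eq_neg [IsDomain R] [NeZero (2 : R)]
    {A B : Matrix (Fin 2) (Fin 2) R} (hA : A * A = -1) (h : A * B = -(B * A)) :
    B.trace = 0 := by
  have hB : A * B * A = B := by rw [h, neg_mul, mul_assoc, hA]; simp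
  have hneg : B.trace = -B.trace := by
    calc B.trace = (A * B * A).trace := by rw [hB]
      _ = (B * A * A).trace := by rw [mul_assoc, trace_mul_comm]
      _ = -B.trace := by rw [mul_assoc, hA]; simp
  have h2 : (2 : R) * B.trace = 0 := by linear_combination hneg
  simpa [two_ne_zero] using h2

end Matrix

namespace Matrix.SpecialLinearGroup

theorem mul_self_eq_neg_one_of_trace_eq_zero {R : Type*} [CommRing R] {A : SL(2, R)}
    (hA : (A : Matrix (Fin 2) (Fin 2) R).trace = 0) : A * A = -1 := by
  apply Subtype.ext
  simp [fin_two_mul_self, hA]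

variable {F : Type*} [Field F]

theorem mem_center_fin_two_iff {A : SL(2, F)} :
    A ∈ Subgroup.center SL(2, F) ↔ A = 1 ∨ A = -1 := by
  rw [mem_center_iff, Fintype.card_fin]
  constructor
  · rintro ⟨r, hr, hA⟩
    rcases sq_eq_one_iff.mp hr with rfl | rfl
    · exact Or.inl (Subtype.ext (by rw [← hA, map_one, coe_one]))
    · exact Or.inr (Subtype.ext (by rw [← hA, map_neg, map_one, coe_neg, coe_one]))
  · rintro (rfl | rfl)
    · exact ⟨1, by norm_num, by rw [map_one, coe_one]⟩
    · exact ⟨-1, by norm_num, by rw [map_neg, map_one, coe_neg, coe_one]⟩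

variable [NeZero (2 : F)]

/-- The split torus `u ↦ u • P + u⁻¹ • Q` of the reflection `J`, where `P, Q = (1 ∓ J) / 2` are
the projections onto its eigenlines. -/
noncomputable def reflectionTorus (J : Matrix (Fin 2) (Fin 2) F) (htr : J.trace = 0)
    (hdet : J.det = -1) : Fˣ →* SL(2, F) where
  toFun u := ⟨(2⁻¹ * ((u : F) + (u : F)⁻¹)) • 1 + (2⁻¹ * ((u : F)⁻¹ - u)) • J, by
    rw [det_fin_two_smul_one_add_smul, htr, hdet]
    field_simp
    ring⟩
  map_one' := by apply Subtype.ext; simp [one_add_one_eq_two, two_ne_zero]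
  map_mul' u v := by
    have hJ : J * J = 1 := by rw [fin_two_mul_self, htr, hdet]; simp
    apply Subtype.ext
    show _ = (_ : Matrix (Fin 2) (Fin 2) F) * _
    simp only [add_mul, mul_add, smul_mul_smul, one_mul, mul_one, hJ, Units.val_mul]
    match_scalars <;> field_simp <;> ring

theorem mem_range_reflectionTorus_of_commute {J : Matrix (Fin 2) (Fin 2) F} (htr : J.trace = 0)
    (hdet : J.det = -1) {B : SL(2, F)} (h : J * B = B * J) :
    B ∈ (reflectionTorus J htr hdet).range := by
  set s := (B : Matrix (Fin 2) (Fin 2) F).trace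
  set t := (J * B).trace
  have hB : (2 : F) • (B : Matrix (Fin 2) (Fin 2) F) = s • 1 + t • J := by
    have := two_det_smul_eq_of_commute htr h
    rw [hdet] at this
    linear_combination (norm := module) (-1 : F) • this
  have hst : (s - t) / 2 * ((s + t) / 2) = 1 := by
    have := congrArg det hB
    rw [det_smul, det_fin_two_smul_one_add_smul, htr, hdet, B.2] at this
    simp at this
    field_simp
    linear_combination -this
  refine ⟨Units.mkOfMulEqOne _ _ hst, Subtype.ext ?_⟩
  show (2⁻¹ * (_ + _)) • 1 + (2⁻¹ * (_ - _)) • J = _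
  rw [Units.val_mkOfMulEqOne, inv_eq_of_mul_eq_one_right hst]
  refine smul_right_injective _ (two_ne_zero (α := F)) ?_
  dsimp only
  rw [hB]
  match_scalars <;> field_simp <;> ring

theorem reflectionTorus_neg_one {J : Matrix (Fin 2) (Fin 2) F} (htr : J.trace = 0)
    (hdet : J.det = -1) : reflectionTorus J htr hdet (-1) = -1 := by
  apply Subtype.ext
  show (2⁻¹ * (_ + _)) • 1 + (2⁻¹ * (_ - _)) • J = -(1 : Matrix (Fin 2) (Fin 2) F)
  norm_num [inv_mul_cancel₀ (two_ne_zero (α := F))]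

end Matrix.SpecialLinearGroup

namespace PSL2

open SpecialLinearGroup

variable {F : Type*} [Field F]

theorem commute_or_anticommute_of_commute_mk {A B : SL(2, F)} (h : Commute (A : PSL2 F) B) :
    A * B = B * A ∨ A * B = -(B * A) := by
  have h' : ((A * B : SL(2, F)) : PSL2 F) = (B * A : SL(2, F)) := h
  rcases mem_center_fin_two_iff.mp (QuotientGroup.eq.mp h') with h1 | h1
  · exact Or.inl (inv_mul_eq_one.mp h1)
  · right
    rw [inv_mul_eq_iff_eq_mul, mul_neg_one] at h1
    rw [h1, neg_neg]

theorem trace_eq_zero_of_orderOf_mk_eq_two {A : SL(2, F)} (h : orderOf (A : PSL2 F) = 2) :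
    (A : Matrix (Fin 2) (Fin 2) F).trace = 0 := by
  by_contra htr
  have hsq : A * A ∈ Subgroup.center SL(2, F) := by
    rw [← QuotientGroup.eq_one_iff, QuotientGroup.mk_mul, ← sq]
    simpa [h] using pow_orderOf_eq_one (A : PSL2 F)
  obtain ⟨r, -, hr⟩ := mem_center_iff.mp hsq
  -- Cayley–Hamilton turns `A² = r` into `(tr A) • A = r + 1`, so `A` is scalar
  have hCH : (A : Matrix (Fin 2) (Fin 2) F).trace • (A : Matrix (Fin 2) (Fin 2) F) =
      (r + 1) • 1 := by
    have hr' : (A : Matrix (Fin 2) (Fin 2) F) * A = r • 1 := by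
      rw [← Matrix.SpecialLinearGroup.coe_mul, ← hr, smul_one_eq_diagonal, scalar_apply]
    have := fin_two_mul_self (A : Matrix (Fin 2) (Fin 2) F)
    rw [hr', Matrix.SpecialLinearGroup.det_coe] at this
    linear_combination (norm := module) -this
  have hscalar : (A : Matrix (Fin 2) (Fin 2) F) =
      ((A : Matrix (Fin 2) (Fin 2) F).trace⁻¹ * (r + 1)) • 1 := by
    rw [mul_smul, ← hCH, inv_smul_smul₀ htr]
  have hcenter : A ∈ Subgroup.center SL(2, F) :=
    Subgroup.mem_center_iff.mpr fun g => Subtype.ext <| by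
      show (g : Matrix (Fin 2) (Fin 2) F) * A = A * g
      rw [hscalar, Matrix.mul_smul, Matrix.smul_mul, mul_one, one_mul]
  have : (A : PSL2 F) = 1 := (QuotientGroup.eq_one_iff _).mpr hcenter
  simp [this] at h

section Torus

variable [NeZero (2 : F)]

/-- The split torus of `PSL₂(F)` through the involution `[A]`; `a • A` is a reflection because
`A² = -1 = a²`. -/
noncomputable def torus {a : F} (ha : a * a = -1) {A : SL(2, F)}
    (hA : (A : Matrix (Fin 2) (Fin 2) F).trace = 0) : Subgroup (PSL2 F) :=
  ((QuotientGroup.mk' _).comp (reflectionTorus (a • (A : Matrix (Fin 2) (Fin 2) F))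
    (by rw [trace_smul, hA, smul_zero]) (by rw [det_smul, A.2]; simp [sq, ha]))).range

variable {a : F} (ha : a * a = -1) {A : SL(2, F)} (hA : (A : Matrix (Fin 2) (Fin 2) F).trace = 0)

theorem card_torus_mul_two_le [Finite F] : Nat.card (torus ha hA) * 2 ≤ Nat.card Fˣ := by
  set ψ := (QuotientGroup.mk' (Subgroup.center SL(2, F))).comp
    (reflectionTorus (a • (A : Matrix (Fin 2) (Fin 2) F)) _ _)
  have hneg : (-1 : Fˣ) ∈ ψ.ker := by
    rw [MonoidHom.mem_ker, MonoidHom.comp_apply, reflectionTorus_neg_one, QuotientGroup.mk'_apply,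
      QuotientGroup.eq_one_iff]
    exact mem_center_fin_two_iff.mpr (Or.inr rfl)
  have hker : 2 ≤ Nat.card ψ.ker := by
    refine (Subgroup.one_lt_card_iff_ne_bot _).mpr fun hbot => two_ne_zero (α := F) ?_
    rw [hbot, Subgroup.mem_bot, Units.ext_iff, Units.val_neg, Units.val_one] at hneg
    linear_combination -hneg
  have hcard := Subgroup.card_mul_index ψ.ker
  rw [Subgroup.index_ker] at hcard
  rw [← hcard, mul_comm (Nat.card ψ.ker)]
  exact Nat.mul_le_mul_left _ hker

theorem mk_mem_torus_of_commute {B : SL(2, F)} (h : A * B = B * A) :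
    (B : PSL2 F) ∈ torus ha hA := by
  obtain ⟨u, hu⟩ := mem_range_reflectionTorus_of_commute
    (J := a • (A : Matrix (Fin 2) (Fin 2) F)) (by rw [trace_smul, hA, smul_zero])
    (by rw [det_smul, A.2]; simp [sq, ha]) (B := B) <| by
    rw [smul_mul_assoc, mul_smul_comm, ← Matrix.SpecialLinearGroup.coe_mul, h,
      Matrix.SpecialLinearGroup.coe_mul]
  exact ⟨u, by simp [hu]⟩

theorem mem_torus_of_commute {t : PSL2 F} (h : Commute (A : PSL2 F) t) (ht : t * t ≠ 1) :
    t ∈ torus ha hA := by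
  obtain ⟨B, rfl⟩ := QuotientGroup.mk_surjective t
  rcases commute_or_anticommute_of_commute_mk h with hAB | hAB
  · exact mk_mem_torus_of_commute ha hA hAB
  · have hBB : B * B = -1 := by
      refine mul_self_eq_neg_one_of_trace_eq_zero (trace_eq_zero_of_mul_eq_neg (A := A) ?_ ?_)
      · rw [← Matrix.SpecialLinearGroup.coe_mul, mul_self_eq_neg_one_of_trace_eq_zero hA,
          Matrix.SpecialLinearGroup.coe_neg, Matrix.SpecialLinearGroup.coe_one]
      · rw [← Matrix.SpecialLinearGroup.coe_mul, hAB, Matrix.SpecialLinearGroup.coe_neg,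
          Matrix.SpecialLinearGroup.coe_mul]
    refine absurd ?_ ht
    rw [← QuotientGroup.mk_mul, hBB, QuotientGroup.eq_one_iff]
    exact mem_center_fin_two_iff.mpr (Or.inr rfl)

theorem eq_torus_of_isCyclic [Finite F] {T : Subgroup (PSL2 F)} [IsCyclic T]
    (hT : Nat.card Fˣ ≤ Nat.card T * 2) (hj : orderOf (A : PSL2 F) = 2) (hjT : (A : PSL2 F) ∈ T) :
    T = torus ha hA := by
  obtain ⟨g, rfl⟩ := (Subgroup.isCyclic_iff_exists_zpowers_eq_top T).mp ‹_›
  refine Subgroup.eq_of_le_of_card_ge (Subgroup.zpowers_le.mpr ?_)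
    (by linarith [card_torus_mul_two_le ha hA])
  by_cases hg : g * g = 1
  · have hzpowers : Subgroup.zpowers (A : PSL2 F) = Subgroup.zpowers g :=
      Subgroup.eq_of_le_of_card_ge (Subgroup.zpowers_le.mpr hjT) <| by
        rw [Nat.card_zpowers, Nat.card_zpowers, hj]
        exact orderOf_le_of_pow_eq_one two_pos (by rw [sq, hg])
    exact Subgroup.zpowers_le.mpr (mk_mem_torus_of_commute ha hA rfl)
      (hzpowers ▸ Subgroup.mem_zpowers g)
  · obtain ⟨k, hk⟩ := Subgroup.mem_zpowers_iff.mp hjT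
    exact mem_torus_of_commute ha hA (hk ▸ (Commute.refl g).zpow_left k) hg

end Torus

theorem eq_of_isCyclic_of_mem [Fintype F] (hF : Fintype.card F % 4 = 1)
    {T T' : Subgroup (PSL2 F)} [IsCyclic T] [IsCyclic T'] (hT : Nat.card Fˣ ≤ Nat.card T * 2)
    (hT' : Nat.card Fˣ ≤ Nat.card T' * 2) {j : PSL2 F} (hj : orderOf j = 2) (hjT : j ∈ T)
    (hjT' : j ∈ T') : T = T' := by
  have : NeZero (2 : F) :=
    ⟨Ring.two_ne_zero fun h => by rw [FiniteField.even_card_iff_char_two] at h; omega⟩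
  obtain ⟨a, ha⟩ := FiniteField.isSquare_neg_one_iff.mpr (by omega : Fintype.card F % 4 ≠ 3)
  obtain ⟨A, rfl⟩ := QuotientGroup.mk_surjective j
  have hA := trace_eq_zero_of_orderOf_mk_eq_two hj
  rw [eq_torus_of_isCyclic ha.symm hA hT hj hjT, eq_torus_of_isCyclic ha.symm hA hT' hj hjT']

end PSL2

theorem conjugate_torus_general (q : ℕ) (hq4 : q % 4 = 1)
    (F : Type*) [Field F] [Fintype F] (hF : Fintype.card F = q)
    (T₁ T₂ : Subgroup (PSL2 F)) (hT₁cyc : IsCyclic T₁) (hT₂cyc : IsCyclic T₂)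
    (hT₁card : Nat.card T₁ = (q - 1) / 2) (hT₂card : Nat.card T₂ = (q - 1) / 2)
    (i₁ i₂ : PSL2 F) (hi₁ : orderOf i₁ = 2) (hi₂ : orderOf i₂ = 2)
    (hi₁T : i₁ ∈ T₁) (hi₂T : i₂ ∈ T₂)
    (m : ℕ) (hm : orderOf (i₁ * i₂) = m) (hmodd : Odd m) :
    Subgroup.map
      (MulAut.conj (((i₁ * i₂) ^ ((m + 1) / 2))⁻¹)).toMonoidHom T₁ = T₂ := by
  have hconj : MulAut.conj ((i₁ * i₂) ^ ((m + 1) / 2))⁻¹ i₁ = i₂ :=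
    MulAut.conj_inv_pow_half_mul_eq (inv_eq_self_of_orderOf_eq_two hi₁)
      (inv_eq_self_of_orderOf_eq_two hi₂)
      (hm ▸ pow_orderOf_eq_one _) hmodd
  have hcard : Nat.card Fˣ ≤ (q - 1) / 2 * 2 := by
    rw [Nat.card_units, Nat.card_eq_fintype_card, hF]
    omega
  have : IsCyclic (T₁.map (MulAut.conj ((i₁ * i₂) ^ ((m + 1) / 2))⁻¹).toMonoidHom) :=
    isCyclic_of_surjective _ (T₁.equivMapOfInjective _ (MulEquiv.injective _)).surjective
  refine PSL2.eq_of_isCyclic_of_mem (hF ▸ hq4) ?_ (hT₂card ▸ hcard) hi₂ ⟨i₁, hi₁T, hconj⟩ hi₂T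
  rwa [Subgroup.card_map_of_injective (MulEquiv.injective _), hT₁card]

/-- Let `G = PSL₂(q)`, `q ≡ 1 mod 4`, `q = p^k`, `p` an odd prime.
Let `T₁, T₂ ≤ G` be cyclic subgroups of cardinality `(q-1)/2` with involutions
`i₁ ∈ T₁`, `i₂ ∈ T₂`.  If `i₁·i₂` has odd order `m` and `z = (i₁·i₂)^{(m+1)/2}`, then
`z⁻¹ T₁ z = T₂`. -/
theorem conjugate_torus (p k q : ℕ) (hp : p.Prime) (hpodd : Odd p)
    (hq : q = p ^ k) (hq4 : q % 4 = 1)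
    (F : Type*) [Field F] [Fintype F] (hF : Fintype.card F = q)
    (T₁ T₂ : Subgroup (PSL2 F)) (hT₁cyc : IsCyclic T₁) (hT₂cyc : IsCyclic T₂)
    (hT₁card : Nat.card T₁ = (q - 1) / 2) (hT₂card : Nat.card T₂ = (q - 1) / 2)
    (i₁ i₂ : PSL2 F) (hi₁ : orderOf i₁ = 2) (hi₂ : orderOf i₂ = 2)
    (hi₁T : i₁ ∈ T₁) (hi₂T : i₂ ∈ T₂)
    (m : ℕ) (hm : orderOf (i₁ * i₂) = m) (hmodd : Odd m) :
    Subgroup.map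
      (MulAut.conj (((i₁ * i₂) ^ ((m + 1) / 2))⁻¹)).toMonoidHom T₁ = T₂ :=
  conjugate_torus_general q hq4 F hF T₁ T₂ hT₁cyc hT₂cyc hT₁card hT₂card i₁ i₂ hi₁ hi₂ hi₁T hi₂T m
    hm hmodd
end

section
/- Let G be a group and let V = {1, i₁, i₂, i₃} be a Klein four-subgroup of G, so i₁, i₂, i₃ are pairwise commuting involutions with i₁·i₂ = i₃. Let g ∈ G and set j₂ = i₂^g. Assume that t₁ = i₁·j₂ has odd order m₁, and set u₁ = t₁^{(m₁+1)/2} and k = i₃^{g·u₁^{-1}}. Assume further that t₂ = i₂·k has odd order m₂, and set u₂ = t₂^{(m₂+1)/2} and x = g·u₁^{-1}·u₂^{-1}. Then i₃^x = i₂, i₂^x = i₁ and i₁^x = i₃; in particular, x lies in the normalizer N_G(V) and induces on V an automorphism of order 3 cyclically permuting i₁, i₂, i₃. -/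
/-!
Two involutions `i`, `j` generate a dihedral group in which `i` inverts `t = i * j`. If `t` has odd
order `m`, then `u = t ^ ((m + 1) / 2)` is a square root of `t` in `⟨t⟩`, so `i` inverts `u` as
well, and `i^u = u⁻² i = t⁻¹ i = j`. Applied to `(i₁, i₂^g)` this gives `y = g * u₁⁻¹` with
`i₂^y = i₁`; applied to `(i₂, i₃^y)` it gives `x = y * u₂⁻¹` with `i₃^x = i₂`. As `u₂` is a power
of `i₂ * i₃^y` and `i₁ = i₂^y` commutes with both factors, `i₂^x = i₁^{u₂⁻¹} = i₁`; finally
`i₁^x = (i₃ i₂)^x = i₂ i₁ = i₃`.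
-/

section Involutions

variable {G : Type*} [Group G]

theorem pow_half_succ_orderOf_sq {t : G} (ht : Odd (orderOf t)) :
    (t ^ ((orderOf t + 1) / 2)) ^ 2 = t := by
  rw [← pow_mul, Nat.div_mul_cancel ht.add_one.two_dvd, pow_succ, pow_orderOf_eq_one, one_mul]

theorem inv_conj_eq_self {i : G} (hi : i⁻¹ = i) (g : G) : (g⁻¹ * i * g)⁻¹ = g⁻¹ * i * g := by
  simp [mul_assoc, hi]

theorem pow_half_succ_orderOf_mul_conj_eq {i j : G} (hi : i⁻¹ = i) (hj : j⁻¹ = j)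
    (hodd : Odd (orderOf (i * j))) :
    (i * j) ^ ((orderOf (i * j) + 1) / 2) * j * ((i * j) ^ ((orderOf (i * j) + 1) / 2))⁻¹ = i := by
  set t := i * j with ht
  set u := t ^ ((orderOf t + 1) / 2)
  have hit : i * t * i⁻¹ = t⁻¹ := by
    rw [ht, mul_inv_rev, hj]
    nth_rw 1 [← hi]
    group
  have hiu : i * u * i⁻¹ = u⁻¹ := by rw [← conj_pow, hit, inv_pow]
  have huj : u⁻¹ * i * u = j :=
    calc u⁻¹ * i * u = u⁻¹ * (i * u * i⁻¹) * i := by group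
      _ = (u ^ 2)⁻¹ * i := by rw [hiu]; group
      _ = j := by rw [pow_half_succ_orderOf_sq hodd, ht, mul_inv_rev, inv_mul_cancel_right, hj]
  rw [← huj]
  group

end Involutions

theorem element_of_order_three_permuting_involutions_general (G : Type*) [Group G]
    (V : Subgroup G) (i₁ i₂ i₃ : G) (hV : (V : Set G) = {1, i₁, i₂, i₃})
    (h₁ : orderOf i₁ = 2) (h₂ : orderOf i₂ = 2) (h₃ : orderOf i₃ = 2)
    (hcomm : i₁ * i₂ = i₂ * i₁) (hprod : i₁ * i₂ = i₃)
    (g : G) (m₁ : ℕ) (hm₁ : orderOf (i₁ * (g⁻¹ * i₂ * g)) = m₁) (hodd₁ : Odd m₁)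
    (u₁ : G) (hu₁ : u₁ = (i₁ * (g⁻¹ * i₂ * g)) ^ ((m₁ + 1) / 2))
    (k : G) (hk : k = (g * u₁⁻¹)⁻¹ * i₃ * (g * u₁⁻¹))
    (m₂ : ℕ) (hm₂ : orderOf (i₂ * k) = m₂) (hodd₂ : Odd m₂)
    (u₂ : G) (hu₂ : u₂ = (i₂ * k) ^ ((m₂ + 1) / 2))
    (x : G) (hx : x = g * u₁⁻¹ * u₂⁻¹) :
    x⁻¹ * i₃ * x = i₂ ∧ x⁻¹ * i₂ * x = i₁ ∧ x⁻¹ * i₁ * x = i₃ ∧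
      x ∈ Subgroup.normalizer (V : Set G) := by
  have hi₁ := inv_eq_self_of_orderOf_eq_two h₁
  have hi₂ := inv_eq_self_of_orderOf_eq_two h₂
  have hi₃ := inv_eq_self_of_orderOf_eq_two h₃
  subst hm₁ hm₂
  have hu₁i₁ : u₁ * (g⁻¹ * i₂ * g) * u₁⁻¹ = i₁ :=
    hu₁ ▸ pow_half_succ_orderOf_mul_conj_eq hi₁ (inv_conj_eq_self hi₂ g) hodd₁
  have hu₂i₂ : u₂ * k * u₂⁻¹ = i₂ :=
    hu₂ ▸ pow_half_succ_orderOf_mul_conj_eq hi₂ (hk ▸ inv_conj_eq_self hi₃ _) hodd₂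
  have hi₂y : (g * u₁⁻¹)⁻¹ * i₂ * (g * u₁⁻¹) = i₁ := by rw [← hu₁i₁]; group
  have hi₁i₂ : Commute i₁ i₂ := hcomm
  have hi₂i₃ : Commute i₂ i₃ := hprod ▸ hi₁i₂.symm.mul_right (Commute.refl i₂)
  have hi₃i₂ : i₃ * i₂ = i₁ := by
    rw [← hprod, mul_assoc]
    nth_rw 1 [← hi₂]
    rw [inv_mul_cancel, mul_one]
  have hi₁k : Commute i₁ k := by
    rw [← hi₂y, hk]
    simpa using hi₂i₃.conj (g * u₁⁻¹)⁻¹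
  have hi₁u₂ : Commute i₁ u₂ := hu₂ ▸ (hi₁i₂.mul_right hi₁k).pow_right _
  have e₃ : x⁻¹ * i₃ * x = i₂ := by rw [hx, ← hu₂i₂, hk]; group
  have e₂ : x⁻¹ * i₂ * x = i₁ :=
    calc x⁻¹ * i₂ * x = u₂ * ((g * u₁⁻¹)⁻¹ * i₂ * (g * u₁⁻¹)) * u₂⁻¹ := by rw [hx]; group
      _ = i₁ := by rw [hi₂y, hi₁u₂.symm.mul_inv_cancel]
  have e₁ : x⁻¹ * i₁ * x = i₃ :=
    calc x⁻¹ * i₁ * x = (x⁻¹ * i₃ * x) * (x⁻¹ * i₂ * x) := by rw [← hi₃i₂]; group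
      _ = i₃ := by rw [e₃, e₂, ← hcomm, hprod]
  refine ⟨e₃, e₂, e₁, ?_⟩
  rw [hV, ← Subgroup.inv_mem_iff]
  refine Subgroup.mem_normalizer_fintype ?_
  rintro n (rfl | rfl | rfl | rfl) <;> simp [e₁, e₂, e₃]

/-- Let `V = {1, i₁, i₂, i₃}` be a Klein four-subgroup of a group `G`,
so `i₁, i₂, i₃` are pairwise distinct commuting involutions with `i₁·i₂ = i₃`.  Let
`g ∈ G`, set `j₂ = i₂^g`, assume `t₁ = i₁·j₂` has odd order `m₁`, set
`u₁ = t₁^{(m₁+1)/2}` and `k = i₃^{g·u₁⁻¹}`, assume `t₂ = i₂·k` has odd order `m₂`, and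
set `u₂ = t₂^{(m₂+1)/2}` and `x = g·u₁⁻¹·u₂⁻¹`.  Then `i₃^x = i₂`, `i₂^x = i₁`,
`i₁^x = i₃`; in particular `x ∈ N_G(V)` cyclically permutes `i₁, i₂, i₃`. -/
theorem element_of_order_three_permuting_involutions (G : Type*) [Group G]
    (V : Subgroup G) (i₁ i₂ i₃ : G) (hV : (V : Set G) = {1, i₁, i₂, i₃})
    (h₁ : orderOf i₁ = 2) (h₂ : orderOf i₂ = 2) (h₃ : orderOf i₃ = 2)
    (h12 : i₁ ≠ i₂) (h13 : i₁ ≠ i₃) (h23 : i₂ ≠ i₃)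
    (hcomm : i₁ * i₂ = i₂ * i₁) (hprod : i₁ * i₂ = i₃)
    (g : G) (m₁ : ℕ) (hm₁ : orderOf (i₁ * (g⁻¹ * i₂ * g)) = m₁) (hodd₁ : Odd m₁)
    (u₁ : G) (hu₁ : u₁ = (i₁ * (g⁻¹ * i₂ * g)) ^ ((m₁ + 1) / 2))
    (k : G) (hk : k = (g * u₁⁻¹)⁻¹ * i₃ * (g * u₁⁻¹))
    (m₂ : ℕ) (hm₂ : orderOf (i₂ * k) = m₂) (hodd₂ : Odd m₂)
    (u₂ : G) (hu₂ : u₂ = (i₂ * k) ^ ((m₂ + 1) / 2))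
    (x : G) (hx : x = g * u₁⁻¹ * u₂⁻¹) :
    x⁻¹ * i₃ * x = i₂ ∧ x⁻¹ * i₂ * x = i₁ ∧ x⁻¹ * i₁ * x = i₃ ∧
      x ∈ Subgroup.normalizer (V : Set G) :=
  element_of_order_three_permuting_involutions_general G V i₁ i₂ i₃ hV h₁ h₂ h₃ hcomm hprod g m₁ hm₁
    hodd₁ u₁ hu₁ k hk m₂ hm₂ hodd₂ u₂ hu₂ x hx
end

section
/- Let q = p^k be an odd prime power with q > 3 and let G = PSL₂(q). Then the number of involutions in G equals q·a, where a is the odd number among (q−1)/2 and (q+1)/2; that is, the number of involutions equals q(q+1)/2 if q ≡ 1 mod 4, and q(q−1)/2 if q ≡ 3 mod 4. -/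
open Matrix

namespace PSL2Aux

variable {F : Type*} [Field F]

local notation "SL2" => Matrix.SpecialLinearGroup (Fin 2) F
local notation "Q2" => SL2 ⧸ Subgroup.center SL2

/-! ### Elementary counting lemmas -/

lemma card_mulEq_ne_zero [Fintype F] [DecidableEq F] {v : F} (hv : v ≠ 0) :
    Fintype.card {bc : F × F // bc.1 * bc.2 = v} = Fintype.card F - 1 := by
  rw [← Fintype.card_units]
  refine (Fintype.card_congr ?_).symm
  refine
    { toFun := fun u => ⟨((u : F), v * (u : F)⁻¹), by field_simp⟩
      invFun := fun bc => Units.mk0 bc.1.1 (fun h => hv (by rw [← bc.2, h, zero_mul]))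
      left_inv := fun u => by ext; simp
      right_inv := fun bc => by
        obtain ⟨⟨b, c⟩, hbc⟩ := bc
        have hb : b ≠ 0 := fun h => hv (by rw [← hbc, h, zero_mul])
        apply Subtype.ext
        simp only [Units.mk0_val]
        refine Prod.ext rfl ?_
        show v * b⁻¹ = c
        rw [← hbc]
        show b * c * b⁻¹ = c
        rw [mul_comm b c, mul_assoc, mul_inv_cancel₀ hb, mul_one] }

lemma card_mulEq_zero [Fintype F] [DecidableEq F] :
    Fintype.card {bc : F × F // bc.1 * bc.2 = 0} = 2 * Fintype.card F - 1 := by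
  rw [Fintype.card_subtype]
  have h1 : (Finset.univ.filter fun bc : F × F => bc.1 * bc.2 = 0)
      = (Finset.univ.filter fun bc : F × F => bc.1 = 0)
        ∪ (Finset.univ.filter fun bc : F × F => bc.2 = 0) := by
    rw [← Finset.filter_or]; simp [mul_eq_zero]
  have h2 : (Finset.univ.filter fun bc : F × F => bc.1 = 0) = {(0 : F)} ×ˢ Finset.univ := by
    ext ⟨b, c⟩; simp [eq_comm]
  have h3 : (Finset.univ.filter fun bc : F × F => bc.2 = 0) = Finset.univ ×ˢ {(0 : F)} := by
    ext ⟨b, c⟩; simp [eq_comm]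
  have h4 : (Finset.univ.filter fun bc : F × F => bc.1 = 0)
      ∩ (Finset.univ.filter fun bc : F × F => bc.2 = 0) = {((0 : F), (0 : F))} := by
    ext ⟨b, c⟩; simp [Prod.ext_iff, and_comm]
  have := Finset.card_union_add_card_inter
    (Finset.univ.filter fun bc : F × F => bc.1 = 0)
    (Finset.univ.filter fun bc : F × F => bc.2 = 0)
  rw [h4, h2, h3] at this
  simp only [Finset.card_singleton, Finset.card_product, Finset.card_univ] at this
  rw [h1, h2, h3]
  omega

lemma card_triples [Fintype F] [DecidableEq F] :
    Fintype.card {x : F × F × F // x.2.1 * x.2.2 = -(1 + x.1 * x.1)}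
      = Fintype.card F * (Fintype.card F - 1)
        + (Finset.univ.filter fun a : F => a * a = -1).card * Fintype.card F := by
  have key : ∀ a : F, Fintype.card {bc : F × F // bc.1 * bc.2 = -(1 + a * a)}
      = (Fintype.card F - 1) + (if a * a = -1 then Fintype.card F else 0) := by
    intro a
    by_cases h : a * a = -1
    · have hv : -(1 + a * a) = 0 := by rw [h]; ring
      simp only [hv, card_mulEq_zero, if_pos h]
      have : 1 ≤ Fintype.card F := Fintype.card_pos
      omega
    · have hv : -(1 + a * a) ≠ 0 := by
        intro h0; apply h; linear_combination -h0
      rw [card_mulEq_ne_zero hv, if_neg h]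
      omega
  calc Fintype.card {x : F × F × F // x.2.1 * x.2.2 = -(1 + x.1 * x.1)}
      = ∑ a : F, Fintype.card {bc : F × F // bc.1 * bc.2 = -(1 + a * a)} := by
        rw [Fintype.card_congr (Equiv.subtypeProdEquivSigmaSubtype
          (fun (a : F) (bc : F × F) => bc.1 * bc.2 = -(1 + a * a)))]
        rw [Fintype.card_sigma]
    _ = ∑ a : F, ((Fintype.card F - 1) + (if a * a = -1 then Fintype.card F else 0)) := by
        simp only [key]
    _ = _ := by
        rw [Finset.sum_add_distrib, Finset.sum_const, ← Finset.sum_filter,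
          Finset.sum_const, Finset.card_univ, smul_eq_mul, smul_eq_mul]

lemma card_sq_neg_one_of_one [Fintype F] [DecidableEq F] (h2 : (2 : F) ≠ 0)
    (h : Fintype.card F % 4 = 1) :
    (Finset.univ.filter fun a : F => a * a = -1).card = 2 := by
  obtain ⟨b, hb⟩ := (FiniteField.isSquare_neg_one_iff (F := F)).mpr (by omega)
  have hb0 : b ≠ 0 := by
    intro h0; rw [h0, mul_zero] at hb; exact one_ne_zero (neg_eq_zero.mp hb)
  have hbne : b ≠ -b := by
    intro h0
    apply hb0
    rcases mul_eq_zero.mp (show (2 : F) * b = 0 by linear_combination h0) with h' | h'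
    · exact absurd h' h2
    · exact h'
  have : (Finset.univ.filter fun a : F => a * a = -1) = {b, -b} := by
    ext a
    simp only [Finset.mem_filter, Finset.mem_univ, true_and, Finset.mem_insert,
      Finset.mem_singleton]
    constructor
    · intro ha
      have : (a - b) * (a + b) = 0 := by linear_combination ha + hb
      rcases mul_eq_zero.mp this with h' | h'
      · left; linear_combination h'
      · right; linear_combination h'
    · rintro (rfl | rfl)
      · linear_combination -hb
      · linear_combination -hb
  rw [this, Finset.card_pair hbne]

lemma card_sq_neg_one_of_three [Fintype F] [DecidableEq F]
    (h : Fintype.card F % 4 = 3) :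
    (Finset.univ.filter fun a : F => a * a = -1).card = 0 := by
  rw [Finset.card_eq_zero, Finset.filter_eq_empty_iff]
  intro a _ ha
  exact absurd (FiniteField.isSquare_neg_one_iff.mp ⟨a, ha.symm⟩) (by omega)

/-! ### Matrix lemmas -/

lemma entries (A : SL2) :
    A.1 0 0 * A.1 1 1 - A.1 0 1 * A.1 1 0 = 1 := by
  have := A.2
  rwa [Matrix.det_fin_two] at this

lemma mem_center_iff' (h2 : (2 : F) ≠ 0) {A : SL2} :
    A ∈ Subgroup.center SL2 ↔ A = 1 ∨ A = -1 := by
  constructor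
  · intro h
    obtain ⟨r, hr, hA⟩ := Matrix.SpecialLinearGroup.mem_center_iff.mp h
    rw [Fintype.card_fin] at hr
    have hr2 : (r - 1) * (r + 1) = 0 := by linear_combination hr
    rcases mul_eq_zero.mp hr2 with h | h
    · left
      have hr1 : r = 1 := by linear_combination h
      apply Subtype.ext
      rw [← hA, hr1, Matrix.SpecialLinearGroup.coe_one]
      ext i j
      fin_cases i <;> fin_cases j <;>
        simp [Matrix.scalar_apply, Matrix.one_apply, Matrix.diagonal_apply]
    · right
      have hr1 : r = -1 := by linear_combination h
      apply Subtype.ext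
      rw [← hA, hr1, Matrix.SpecialLinearGroup.coe_neg, Matrix.SpecialLinearGroup.coe_one]
      ext i j
      fin_cases i <;> fin_cases j <;>
        simp [Matrix.scalar_apply, Matrix.one_apply, Matrix.diagonal_apply]
  · rintro (rfl | rfl)
    · exact Subgroup.one_mem _
    · exact Subgroup.mem_center_iff.mpr fun B => by
        rw [mul_neg_one, neg_one_mul]

lemma neg_ne_self (h2 : (2 : F) ≠ 0) (A : SL2) : A ≠ -A := by
  intro h
  have h00 : A.1 0 0 = -(A.1 0 0) := by
    conv_lhs => rw [h]
    simp [Matrix.SpecialLinearGroup.coe_neg]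
  have h11 : A.1 1 1 = -(A.1 1 1) := by
    conv_lhs => rw [h]
    simp [Matrix.SpecialLinearGroup.coe_neg]
  have h01 : A.1 0 1 = -(A.1 0 1) := by
    conv_lhs => rw [h]
    simp [Matrix.SpecialLinearGroup.coe_neg]
  have hd := entries A
  have e00 : A.1 0 0 = 0 := by
    rcases mul_eq_zero.mp (show (2 : F) * A.1 0 0 = 0 by linear_combination h00) with h | h
    · exact absurd h h2
    · exact h
  have e11 : A.1 1 1 = 0 := by
    rcases mul_eq_zero.mp (show (2 : F) * A.1 1 1 = 0 by linear_combination h11) with h | h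
    · exact absurd h h2
    · exact h
  have e01 : A.1 0 1 = 0 := by
    rcases mul_eq_zero.mp (show (2 : F) * A.1 0 1 = 0 by linear_combination h01) with h | h
    · exact absurd h h2
    · exact h
  rw [e00, e11, e01] at hd
  simp at hd

lemma mul_self_entries (A : SL2) (i j : Fin 2) :
    (A * A).1 i j = A.1 i 0 * A.1 0 j + A.1 i 1 * A.1 1 j := by
  rw [Matrix.SpecialLinearGroup.coe_mul, Matrix.mul_apply, Fin.sum_univ_two]

lemma sq_eq_one_cases (h2 : (2 : F) ≠ 0) {A : SL2} (hA : A * A = 1) :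
    A = 1 ∨ A = -1 := by
  set a := A.1 0 0 with ha
  set b := A.1 0 1 with hb
  set c := A.1 1 0 with hc
  set d := A.1 1 1 with hd'
  have hd : a * d - b * c = 1 := entries A
  have h00 : a * a + b * c = 1 := by
    have := congrArg (fun M : SL2 => M.1 0 0) hA
    simpa [mul_self_entries] using this
  have h01 : a * b + b * d = 0 := by
    have := congrArg (fun M : SL2 => M.1 0 1) hA
    simpa [mul_self_entries, Matrix.one_apply] using this
  have h10 : c * a + d * c = 0 := by
    have := congrArg (fun M : SL2 => M.1 1 0) hA
    simpa [mul_self_entries, Matrix.one_apply] using this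
  have htr : a + d ≠ 0 := by
    intro h
    apply h2
    linear_combination a * h - h00 - hd
  have hb0 : b = 0 := by
    rcases mul_eq_zero.mp (show b * (a + d) = 0 by linear_combination h01) with h | h
    · exact h
    · exact absurd h htr
  have hc0 : c = 0 := by
    rcases mul_eq_zero.mp (show c * (a + d) = 0 by linear_combination h10) with h | h
    · exact h
    · exact absurd h htr
  have ha1 : a * a = 1 := by linear_combination h00 - c * hb0
  have had : a * d = 1 := by linear_combination hd + c * hb0
  have hda : d = a := by
    have : a * (d - a) = 0 := by linear_combination had - ha1
    rcases mul_eq_zero.mp this with h | h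
    · rw [h] at ha1; simp at ha1
    · linear_combination h
  have hacases : (a - 1) * (a + 1) = 0 := by linear_combination ha1
  rcases mul_eq_zero.mp hacases with h | h
  · left
    have ha' : a = 1 := by linear_combination h
    apply Subtype.ext
    rw [Matrix.eta_fin_two A.1]
    rw [← ha, ← hb, ← hc, ← hd', hb0, hc0, hda, ha']
    simp [Matrix.one_fin_two]
  · right
    have ha' : a = -1 := by linear_combination h
    apply Subtype.ext
    rw [Matrix.SpecialLinearGroup.coe_neg, Matrix.SpecialLinearGroup.coe_one]
    rw [Matrix.eta_fin_two A.1]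
    rw [← ha, ← hb, ← hc, ← hd', hb0, hc0, hda, ha']
    simp [Matrix.one_fin_two]

lemma trace_zero_sq_eq_neg_one (A : SL2) (ht : A.1 0 0 + A.1 1 1 = 0) :
    A * A = -1 := by
  have hd := entries A
  apply Subtype.ext
  rw [Matrix.SpecialLinearGroup.coe_neg, Matrix.SpecialLinearGroup.coe_one]
  ext i j
  rw [Matrix.neg_apply, Matrix.one_apply]
  rw [show ((A * A).1 : Matrix (Fin 2) (Fin 2) F) = ((A*A) : SL2).1 from rfl]
  rw [mul_self_entries]
  fin_cases i <;> fin_cases j <;> simp only [Fin.zero_eta, Fin.mk_one, Fin.isValue] <;> norm_num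
  · linear_combination A.1 0 0 * ht - hd
  · linear_combination A.1 0 1 * ht
  · linear_combination A.1 1 0 * ht
  · linear_combination A.1 1 1 * ht - hd

lemma trace_zero_of_sq_neg_one (h2 : (2 : F) ≠ 0) {A : SL2} (hA : A * A = -1) :
    A.1 0 0 + A.1 1 1 = 0 := by
  set a := A.1 0 0 with ha
  set b := A.1 0 1 with hb
  set c := A.1 1 0 with hc
  set d := A.1 1 1 with hd'
  have hd : a * d - b * c = 1 := entries A
  have key : ∀ i j : Fin 2, (A * A).1 i j = (-(1 : Matrix (Fin 2) (Fin 2) F)) i j := by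
    intro i j
    rw [hA, Matrix.SpecialLinearGroup.coe_neg, Matrix.SpecialLinearGroup.coe_one]
  have h00 : a * a + b * c = -1 := by
    have := key 0 0
    rw [mul_self_entries, Matrix.neg_apply, Matrix.one_apply] at this
    simpa using this
  have h01 : a * b + b * d = 0 := by
    have := key 0 1
    rw [mul_self_entries, Matrix.neg_apply, Matrix.one_apply] at this
    simpa using this
  have h10 : c * a + d * c = 0 := by
    have := key 1 0
    rw [mul_self_entries, Matrix.neg_apply, Matrix.one_apply] at this
    simpa using this
  have h11 : c * b + d * d = -1 := by
    have := key 1 1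
    rw [mul_self_entries, Matrix.neg_apply, Matrix.one_apply] at this
    simpa using this
  by_contra htr
  have hb0 : b = 0 := by
    rcases mul_eq_zero.mp (show b * (a + d) = 0 by linear_combination h01) with h | h
    · exact h
    · exact absurd h htr
  have hc0 : c = 0 := by
    rcases mul_eq_zero.mp (show c * (a + d) = 0 by linear_combination h10) with h | h
    · exact h
    · exact absurd h htr
  have ha1 : a * a = -1 := by linear_combination h00 - c * hb0
  have hd1 : d * d = -1 := by linear_combination h11 - b * hc0
  have had : a * d = 1 := by linear_combination hd + c * hb0
  have : (a + d) * (a + d) = 0 := by linear_combination ha1 + hd1 + 2 * had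
  exact htr (mul_self_eq_zero.mp this)

/-! ### Order / quotient lemmas -/

lemma mk_sq (A : SL2) :
    (QuotientGroup.mk A : Q2) ^ 2 = QuotientGroup.mk (A * A) := by
  rw [pow_two]; rfl

lemma mk_eq_mk_iff (h2 : (2 : F) ≠ 0) {A B : SL2} :
    (QuotientGroup.mk A : Q2) = QuotientGroup.mk B ↔ B = A ∨ B = -A := by
  rw [QuotientGroup.eq, mem_center_iff' h2, inv_mul_eq_one, eq_comm (a := A),
    inv_mul_eq_iff_eq_mul, mul_neg_one]

lemma orderOf_mk_eq_two_iff (h2 : (2 : F) ≠ 0) (A : SL2) :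
    orderOf (QuotientGroup.mk A : Q2) = 2 ↔ A.1 0 0 + A.1 1 1 = 0 := by
  constructor
  · intro h
    have hsq : (QuotientGroup.mk A : Q2) ^ 2 = 1 := by
      have := pow_orderOf_eq_one (QuotientGroup.mk A : Q2)
      rwa [h] at this
    have hne : (QuotientGroup.mk A : Q2) ≠ 1 := by
      intro h1; rw [h1, orderOf_one] at h; omega
    rw [mk_sq, QuotientGroup.eq_one_iff, mem_center_iff' h2] at hsq
    have hAA : A * A = -1 := by
      rcases hsq with h' | h'
      · exfalso
        apply hne
        rw [QuotientGroup.eq_one_iff, mem_center_iff' h2]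
        exact sq_eq_one_cases h2 h'
      · exact h'
    exact trace_zero_of_sq_neg_one h2 hAA
  · intro ht
    have hAA := trace_zero_sq_eq_neg_one A ht
    have hsq : (QuotientGroup.mk A : Q2) ^ 2 = 1 := by
      rw [mk_sq, hAA, QuotientGroup.eq_one_iff, mem_center_iff' h2]
      exact Or.inr rfl
    have hne : (QuotientGroup.mk A : Q2) ≠ 1 := by
      rw [Ne, QuotientGroup.eq_one_iff, mem_center_iff' h2]
      rintro (rfl | rfl)
      · apply h2
        have e0 : ((1 : SL2)).1 0 0 = 1 := by
          rw [Matrix.SpecialLinearGroup.coe_one, Matrix.one_apply]; simp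
        have e1 : ((1 : SL2)).1 1 1 = 1 := by
          rw [Matrix.SpecialLinearGroup.coe_one, Matrix.one_apply]; simp
        rw [e0, e1] at ht
        linear_combination ht
      · apply h2
        have e0 : ((-1 : SL2)).1 0 0 = -1 := by
          rw [Matrix.SpecialLinearGroup.coe_neg, Matrix.SpecialLinearGroup.coe_one,
            Matrix.neg_apply, Matrix.one_apply]; simp
        have e1 : ((-1 : SL2)).1 1 1 = -1 := by
          rw [Matrix.SpecialLinearGroup.coe_neg, Matrix.SpecialLinearGroup.coe_one,
            Matrix.neg_apply, Matrix.one_apply]; simp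
        rw [e0, e1] at ht
        linear_combination -ht
    exact orderOf_eq_prime hsq hne

lemma trace_neg (A : SL2) (ht : A.1 0 0 + A.1 1 1 = 0) :
    (-A).1 0 0 + (-A).1 1 1 = 0 := by
  have e0 : (-A).1 0 0 = -(A.1 0 0) := by rw [Matrix.SpecialLinearGroup.coe_neg]; simp
  have e1 : (-A).1 1 1 = -(A.1 1 1) := by rw [Matrix.SpecialLinearGroup.coe_neg]; simp
  rw [e0, e1]
  linear_combination -ht

/-! ### The equivalence with triples -/

def traceZeroEquiv : {A : SL2 // A.1 0 0 + A.1 1 1 = 0} ≃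
    {x : F × F × F // x.2.1 * x.2.2 = -(1 + x.1 * x.1)} where
  toFun A := ⟨(A.1.1 0 0, A.1.1 0 1, A.1.1 1 0), by
    have hd := entries A.1
    have ht := A.2
    dsimp only
    linear_combination A.1.1 0 0 * ht - hd⟩
  invFun x := ⟨⟨!![x.1.1, x.1.2.1; x.1.2.2, -x.1.1], by
      rw [Matrix.det_fin_two_of]
      linear_combination -x.2⟩, by simp⟩
  left_inv A := by
    apply Subtype.ext
    apply Subtype.ext
    show !![_, _; _, _] = A.1.1
    have ht := A.2
    ext i j
    fin_cases i <;> fin_cases j <;> simp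
    linear_combination -ht
  right_inv x := by
    apply Subtype.ext
    show (_, _, _) = x.1
    refine Prod.ext ?_ (Prod.ext ?_ ?_) <;> simp

/-! ### The fiber count -/

lemma two_mul_card_inv [Fintype F] [DecidableEq F] (h2 : (2 : F) ≠ 0) :
    2 * Nat.card {i : Q2 // orderOf i = 2}
      = Nat.card {A : SL2 // A.1 0 0 + A.1 1 1 = 0} := by
  classical
  haveI : Fintype Q2 := Fintype.ofFinite _
  haveI fI : Fintype {i : Q2 // orderOf i = 2} := Fintype.ofFinite _
  haveI fT : Fintype {A : SL2 // A.1 0 0 + A.1 1 1 = 0} := Fintype.ofFinite _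
  rw [Nat.card_eq_fintype_card, Nat.card_eq_fintype_card]
  set g : {A : SL2 // A.1 0 0 + A.1 1 1 = 0} → {i : Q2 // orderOf i = 2} :=
    fun A => ⟨QuotientGroup.mk A.1, (orderOf_mk_eq_two_iff h2 A.1).mpr A.2⟩ with hg
  have hfiber : ∀ y : {i : Q2 // orderOf i = 2}, Nat.card {x // g x = y} = 2 := by
    intro y
    obtain ⟨B, hB⟩ := QuotientGroup.mk_surjective y.1
    have hBt : B.1 0 0 + B.1 1 1 = 0 :=
      (orderOf_mk_eq_two_iff h2 B).mp (by rw [hB]; exact y.2)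
    have e1 : {x // g x = y} ≃ {A : SL2 // A = B ∨ A = -B} := by
      refine ((Equiv.subtypeEquivRight
          (q := fun x : {A : SL2 // A.1 0 0 + A.1 1 1 = 0} =>
            (QuotientGroup.mk x.1 : Q2) = y.1) fun x => Subtype.ext_iff).trans
        ((Equiv.subtypeSubtypeEquivSubtypeInter
            (fun A : SL2 => A.1 0 0 + A.1 1 1 = 0)
            (fun A : SL2 => (QuotientGroup.mk A : Q2) = y.1)).trans
          (Equiv.subtypeEquivRight fun A => ?_)))
      constructor
      · rintro ⟨htA, hmk⟩
        have : (QuotientGroup.mk B : Q2) = QuotientGroup.mk A := by rw [hB, ← hmk]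
        exact (mk_eq_mk_iff h2).mp this
      · rintro (rfl | rfl)
        · exact ⟨hBt, hB⟩
        · refine ⟨trace_neg B hBt, ?_⟩
          rw [← hB]
          exact ((mk_eq_mk_iff h2).mpr (Or.inr rfl)).symm
    have e2 : {A : SL2 // A = B ∨ A = -B} ≃ ({B, -B} : Set SL2) :=
      Equiv.subtypeEquivRight fun A => by simp [Set.mem_insert_iff]
    rw [Nat.card_congr (e1.trans e2), Nat.card_coe_set_eq,
      Set.ncard_pair (neg_ne_self h2 B)]
  have hsig := Fintype.card_congr (Equiv.sigmaFiberEquiv g).symm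
  rw [Fintype.card_sigma] at hsig
  calc 2 * Fintype.card {i : Q2 // orderOf i = 2}
      = ∑ _y : {i : Q2 // orderOf i = 2}, 2 := by
        rw [Finset.sum_const, Finset.card_univ, smul_eq_mul, mul_comm]
    _ = ∑ y : {i : Q2 // orderOf i = 2}, Fintype.card {x // g x = y} := by
        refine Finset.sum_congr rfl fun y _ => ?_
        rw [← Nat.card_eq_fintype_card, hfiber]
    _ = Fintype.card {A : SL2 // A.1 0 0 + A.1 1 1 = 0} := hsig.symm

end PSL2Aux

/-- Let `q = p^k` be an odd prime power with `q > 3` and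
`G = PSL₂(q)`.  Then the number of involutions in `G` equals `q·(q+1)/2` if
`q ≡ 1 mod 4` and `q·(q−1)/2` if `q ≡ 3 mod 4`. -/
theorem card_involutions_psl2 (p k q : ℕ) (hp : p.Prime) (hpodd : Odd p)
    (hq : q = p ^ k) (hq3 : 3 < q)
    (F : Type*) [Field F] [Fintype F] (hF : Fintype.card F = q) :
    (q % 4 = 1 → Set.ncard {i : PSL2 F | orderOf i = 2} = q * ((q + 1) / 2)) ∧
    (q % 4 = 3 → Set.ncard {i : PSL2 F | orderOf i = 2} = q * ((q - 1) / 2)) := by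
  classical
  haveI : DecidableEq F := Classical.decEq F
  -- characteristic facts
  have hchar := ringChar.charP F
  obtain ⟨n, hrp, hcard⟩ := FiniteField.card F (ringChar F)
  have hdvd : ringChar F ∣ p ^ k := by
    rw [← hq, ← hF, hcard]
    exact dvd_pow_self _ (by exact_mod_cast n.pos.ne')
  have hrp' : ringChar F = p := (Nat.prime_dvd_prime_iff_eq hrp hp).mp (hrp.dvd_of_dvd_pow hdvd)
  have h2 : (2 : F) ≠ 0 := by
    intro h
    have h' : ((2 : ℕ) : F) = 0 := by exact_mod_cast h
    have := (CharP.cast_eq_zero_iff F (ringChar F) 2).mp h'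
    rw [hrp'] at this
    have hp2 : p = 2 := (Nat.prime_dvd_prime_iff_eq hp Nat.prime_two).mp this
    rw [hp2] at hpodd
    simp [Nat.odd_iff] at hpodd
  have hqodd : q % 2 = 1 := by
    rw [hq, ← Nat.odd_iff]
    exact hpodd.pow
  -- the set of involutions
  have hncard : {i : PSL2 F | orderOf i = 2}.ncard
      = Nat.card {i : PSL2 F // orderOf i = 2} := by
    rw [← Nat.card_coe_set_eq]
    simp only [Set.coe_setOf]
  have key : 2 * Nat.card {i : PSL2 F // orderOf i = 2}
      = q * (q - 1) + (Finset.univ.filter fun a : F => a * a = -1).card * q := by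
    rw [PSL2Aux.two_mul_card_inv h2, Nat.card_congr PSL2Aux.traceZeroEquiv,
      Nat.card_eq_fintype_card, PSL2Aux.card_triples, hF]
  constructor
  · intro h1
    rw [PSL2Aux.card_sq_neg_one_of_one h2 (by rw [hF]; exact h1)] at key
    have e1 : q * (q - 1) + 2 * q = q * (q + 1) := by
      rw [mul_comm 2 q, ← Nat.mul_add]
      congr 1
      omega
    rw [e1] at key
    have hdvd2 : 2 ∣ q + 1 := by omega
    have e2 : 2 * (q * ((q + 1) / 2)) = q * (q + 1) := by
      have : (q + 1) / 2 * 2 = q + 1 := Nat.div_mul_cancel hdvd2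
      calc 2 * (q * ((q + 1) / 2)) = q * ((q + 1) / 2 * 2) := by ring
        _ = q * (q + 1) := by rw [this]
    rw [hncard]
    exact Nat.eq_of_mul_eq_mul_left (by norm_num) (key.trans e2.symm)
  · intro h1
    rw [PSL2Aux.card_sq_neg_one_of_three (by rw [hF]; exact h1)] at key
    rw [zero_mul, add_zero] at key
    have hdvd2 : 2 ∣ q - 1 := by omega
    have e2 : 2 * (q * ((q - 1) / 2)) = q * (q - 1) := by
      have : (q - 1) / 2 * 2 = q - 1 := Nat.div_mul_cancel hdvd2
      calc 2 * (q * ((q - 1) / 2)) = q * ((q - 1) / 2 * 2) := by ring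
        _ = q * (q - 1) := by rw [this]
    rw [hncard]
    exact Nat.eq_of_mul_eq_mul_left (by norm_num) (key.trans e2.symm)
end

section
/- Let q = p^k be an odd prime power with q > 3 and let G = PSL₂(q). Then any two distinct Sylow p-subgroups of G intersect trivially; equivalently, every element of G of order p lies in exactly one Sylow p-subgroup of G. -/
open Subgroup

def AbelianPCentralizers (p : ℕ) (G : Type*) [Group G] : Prop :=
  ∀ x : G, x ≠ 1 → (∃ n : ℕ, x ^ p ^ n = 1) →
    IsPGroup p (centralizer {x}) ∧ IsMulCommutative (centralizer {x})

namespace Sylow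

variable {G : Type*} [Group G] {p : ℕ}

theorem eq_centralizer_of_le_centralizer (hG : AbelianPCentralizers p G) (P : Sylow p G)
    {x : G} (hxP : x ∈ P) (hx : x ≠ 1) (hle : (P : Subgroup G) ≤ centralizer {x}) :
    (P : Subgroup G) = centralizer {x} := by
  obtain ⟨n, hn⟩ := P.isPGroup' ⟨x, hxP⟩
  exact (P.is_maximal' (hG x hx ⟨n, congrArg Subtype.val hn⟩).1 hle).symm

theorem isMulCommutative_of_abelianPCentralizers [Finite G] [Fact p.Prime]
    (hG : AbelianPCentralizers p G) (P : Sylow p G) : IsMulCommutative P := by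
  rcases subsingleton_or_nontrivial P with _ | _
  · exact ⟨⟨fun _ _ => Subsingleton.elim _ _⟩⟩
  have := P.isPGroup'.center_nontrivial
  obtain ⟨z, hz⟩ := exists_ne (1 : center P)
  have hz1 : (z : G) ≠ 1 := fun h => hz (Subtype.ext (Subtype.ext h))
  have hPz : (P : Subgroup G) ≤ centralizer {(z : G)} := fun g hg =>
    mem_centralizer_singleton_iff.mpr (congrArg Subtype.val (mem_center_iff.mp z.2 ⟨g, hg⟩))
  have hP_eq := P.eq_centralizer_of_le_centralizer hG (z : P).2 hz1 hPz
  obtain ⟨n, hn⟩ := P.isPGroup' z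
  have := (hG _ hz1 ⟨n, congrArg Subtype.val hn⟩).2
  rw [← le_centralizer_iff_isMulCommutative, hP_eq]
  exact le_centralizer _

theorem eq_centralizer_of_mem [Finite G] [Fact p.Prime] (hG : AbelianPCentralizers p G)
    (P : Sylow p G) {x : G} (hxP : x ∈ P) (hx : x ≠ 1) :
    (P : Subgroup G) = centralizer {x} := by
  have := P.isMulCommutative_of_abelianPCentralizers hG
  exact P.eq_centralizer_of_le_centralizer hG hxP hx
    ((le_centralizer (P : Subgroup G)).trans
      (centralizer_le (Set.singleton_subset_iff.mpr hxP)))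

theorem inf_eq_bot_of_ne [Finite G] [Fact p.Prime] (hG : AbelianPCentralizers p G)
    {P Q : Sylow p G} (hPQ : P ≠ Q) : (P ⊓ Q : Subgroup G) = ⊥ := by
  refine eq_bot_iff.mpr fun x hx => by_contra fun hx1 => hPQ (Sylow.ext ?_)
  exact (P.eq_centralizer_of_mem hG hx.1 hx1).trans (Q.eq_centralizer_of_mem hG hx.2 hx1).symm

theorem existsUnique_mem [Finite G] [Fact p.Prime] (hG : AbelianPCentralizers p G) {x : G}
    (hx : x ≠ 1) {n : ℕ} (hxn : x ^ p ^ n = 1) : ∃! P : Sylow p G, x ∈ P := by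
  have hxp : IsPGroup p (zpowers x) :=
    .of_card_dvd_pow (n := n) (Nat.card_zpowers x ▸ orderOf_dvd_of_pow_eq_one hxn)
  obtain ⟨P, hP⟩ := hxp.exists_le_sylow
  have hxP := hP (mem_zpowers x)
  refine ⟨P, hxP, fun Q hxQ => Sylow.ext ?_⟩
  exact (Q.eq_centralizer_of_mem hG hxQ hx).trans (P.eq_centralizer_of_mem hG hxP hx).symm

end Sylow

section SquareZero

variable {K R : Type*} [CommSemiring K] [Ring R] [Algebra K R] {N : R}

theorem smul_one_add_smul_pow_char {p : ℕ} [Fact p.Prime] [CharP R p] (hN : N ^ 2 = 0)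
    (a b : K) : (a • (1 : R) + b • N) ^ p = a ^ p • 1 := by
  rw [add_pow_char_of_commute (p := p) (h := ((Commute.one_left N).smul_left a).smul_right b),
    smul_pow, smul_pow, one_pow, pow_eq_zero_of_le (Fact.out : p.Prime).two_le hN, smul_zero,
    add_zero]

theorem commute_smul_one_add_smul (N : R) (a b a' b' : K) :
    Commute (a • (1 : R) + b • N) (a' • 1 + b' • N) :=
  ((Commute.one_left _).smul_left a).add_left
    ((((Commute.one_left (b • N)).smul_left a').symm).add_right
      (((Commute.refl N).smul_left b).smul_right b'))

end SquareZero

namespace Matrix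

variable {n K : Type*} [Fintype n] [DecidableEq n] [Field K]

theorem pow_card_eq_zero_of_isNilpotent {N : Matrix n n K} (hN : IsNilpotent N) :
    N ^ Fintype.card n = 0 := by
  have hchar : N.charpoly = Polynomial.X ^ Fintype.card n :=
    sub_eq_zero.mp (isNilpotent_charpoly_sub_pow_of_isNilpotent hN).eq_zero
  simpa [hchar] using aeval_self_charpoly N

theorem eq_one_of_mul_eq_smul_mul {A M : Matrix n n K} (hM : IsUnit M) {r : K}
    (h : M * A = r • (A * M)) (hA : A.trace ≠ 0) : r = 1 := by
  have hconj : M * A * M⁻¹ = r • A := by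
    rw [h, smul_mul, Matrix.mul_assoc, mul_nonsing_inv _ ((isUnit_iff_isUnit_det M).mp hM),
      Matrix.mul_one]
  have := trace_conj hM A
  rw [hconj, trace_smul, smul_eq_mul] at this
  exact (mul_eq_right₀ hA).mp this

theorem eq_smul_one_add_smul_iff_fin_two {M N : Matrix (Fin 2) (Fin 2) K} {a b : K} :
    M = a • 1 + b • N ↔ M 0 0 = a + b * N 0 0 ∧ M 0 1 = b * N 0 1 ∧ M 1 0 = b * N 1 0 ∧
      M 1 1 = a + b * N 1 1 := by
  simp [← Matrix.ext_iff, Fin.forall_fin_two, and_assoc]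

theorem exists_eq_smul_one_add_smul_of_commute {N M : Matrix (Fin 2) (Fin 2) K} (hN : N ^ 2 = 0)
    (hN0 : N ≠ 0) (h : Commute M N) : ∃ a b : K, M = a • 1 + b • N := by
  have htr : N 0 0 + N 1 1 = 0 := by
    simpa [trace_fin_two] using (isNilpotent_trace_of_isNilpotent ⟨2, hN⟩).eq_zero
  have hdet : N 0 0 * N 1 1 - N 0 1 * N 1 0 = 0 := by
    rw [← det_fin_two]
    exact pow_eq_zero_iff two_ne_zero |>.mp (by rw [← det_pow, hN, det_zero])
  have hc00 := congrFun₂ h.eq 0 0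
  have hc01 := congrFun₂ h.eq 0 1
  have hc10 := congrFun₂ h.eq 1 0
  simp only [mul_apply, Fin.sum_univ_two] at hc00 hc01 hc10
  simp_rw [eq_smul_one_add_smul_iff_fin_two]
  by_cases hb : N 0 1 = 0
  · have h00 : N 0 0 = 0 := pow_eq_zero_iff two_ne_zero |>.mp <| by
      linear_combination N 0 0 * htr - hdet - N 1 0 * hb
    have h11 : N 1 1 = 0 := by linear_combination htr - h00
    have h10 : N 1 0 ≠ 0 := fun h10 => hN0 <| by
      rw [← Matrix.ext_iff]
      simp [Fin.forall_fin_two, h00, hb, h10, h11]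
    refine ⟨M 0 0, M 1 0 / N 1 0, by rw [h00, mul_zero, add_zero], ?_,
      (div_mul_cancel₀ _ h10).symm, ?_⟩
    · rw [hb, mul_zero]
      exact mul_right_cancel₀ h10 (by linear_combination hc00 + M 1 0 * hb)
    · rw [h11, mul_zero, add_zero]
      exact mul_right_cancel₀ h10 (by linear_combination hc10 - M 1 0 * h00 + M 1 0 * h11)
  · refine ⟨M 0 0 - M 0 1 / N 0 1 * N 0 0, M 0 1 / N 0 1, by ring, (div_mul_cancel₀ _ hb).symm,
      ?_, ?_⟩
    · field_simp
      linear_combination -hc00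
    · field_simp
      linear_combination -hc01

end Matrix

namespace PSL2

open Matrix
open scoped MatrixGroups

variable {F : Type*} [Field F]

local notation:1024 "↑ₘ" A:1024 => ((A : SL(2, F)) : Matrix (Fin 2) (Fin 2) F)

theorem mk_eq_one_iff {A : SL(2, F)} :
    (A : PSL2 F) = 1 ↔ ∃ c : F, c ^ 2 = 1 ∧ ↑ₘA = c • 1 := by
  rw [QuotientGroup.eq_one_iff, Matrix.SpecialLinearGroup.mem_center_iff, Fintype.card_fin]
  simp only [scalar_apply, smul_one_eq_diagonal, eq_comm]

theorem exists_mul_eq_smul_mul_of_commute {A M : SL(2, F)} (h : Commute (A : PSL2 F) M) :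
    ∃ r : F, ↑ₘM * ↑ₘA = r • (↑ₘA * ↑ₘM) := by
  have hcen : (A * M)⁻¹ * (M * A) ∈ center SL(2, F) := QuotientGroup.eq.mp h
  obtain ⟨r, -, hr⟩ := Matrix.SpecialLinearGroup.mem_center_iff.mp hcen
  refine ⟨r, ?_⟩
  have := congrArg (fun B : SL(2, F) => ↑ₘB) (mul_inv_cancel_left (A * M) (M * A))
  simp only [Matrix.SpecialLinearGroup.coe_mul] at this hr
  rw [← this, ← hr, scalar_apply, ← smul_one_eq_diagonal, Matrix.mul_smul, Matrix.mul_one]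

theorem exists_lift_eq_smul_one_add_smul_of_mem_centralizer [NeZero (2 : F)] {A : SL(2, F)}
    {c : F} {N : Matrix (Fin 2) (Fin 2) F} (hc : c ≠ 0) (hN : N ^ 2 = 0) (hN0 : N ≠ 0)
    (hA : ↑ₘA = c • (1 + N)) {y : PSL2 F} (hy : y ∈ centralizer {(A : PSL2 F)}) :
    ∃ M : SL(2, F), (M : PSL2 F) = y ∧ ∃ a b : F, ↑ₘM = a • 1 + b • N := by
  obtain ⟨M, rfl⟩ := QuotientGroup.mk_surjective y
  obtain ⟨r, hr⟩ :=
    exists_mul_eq_smul_mul_of_commute (mem_centralizer_singleton_iff.mp hy).symm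
  have htr : (↑ₘA).trace ≠ 0 := by
    rw [hA, trace_smul, trace_add, trace_one,
      (isNilpotent_trace_of_isNilpotent ⟨2, hN⟩).eq_zero]
    simpa using ⟨hc, NeZero.ne 2⟩
  have hM : IsUnit ↑ₘM := (isUnit_iff_isUnit_det _).mpr (by simp)
  rw [eq_one_of_mul_eq_smul_mul hM hr htr, one_smul] at hr
  have hMN : Commute ↑ₘM N := by
    have h1N : Commute ↑ₘM (1 + N) := by
      simpa [hA, inv_smul_smul₀ hc] using
        (Commute.smul_right hr c⁻¹ : Commute ↑ₘM (c⁻¹ • ↑ₘA))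
    simpa using h1N.sub_right (Commute.one_right _)
  exact ⟨M, rfl, exists_eq_smul_one_add_smul_of_commute hN hN0 hMN⟩

theorem commute_mk_of_coe_eq {M M' : SL(2, F)} {N : Matrix (Fin 2) (Fin 2) F} {a b a' b' : F}
    (hM : ↑ₘM = a • 1 + b • N) (hM' : ↑ₘM' = a' • 1 + b' • N) :
    Commute (M : PSL2 F) M' := by
  rw [Commute, SemiconjBy, ← QuotientGroup.mk_mul, ← QuotientGroup.mk_mul]
  congr 1
  refine Subtype.ext ?_
  rw [Matrix.SpecialLinearGroup.coe_mul, Matrix.SpecialLinearGroup.coe_mul, hM, hM']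
  exact (commute_smul_one_add_smul N a b a' b').eq

variable {p : ℕ} [Fact p.Prime] [CharP F p]

theorem exists_lift_eq_smul_one_add (hp : Odd p) {x : PSL2 F} (hx : x ≠ 1) {n : ℕ}
    (hxn : x ^ p ^ n = 1) :
    ∃ (A : SL(2, F)) (c : F) (N : Matrix (Fin 2) (Fin 2) F),
      (A : PSL2 F) = x ∧ c ^ 2 = 1 ∧ N ^ 2 = 0 ∧ N ≠ 0 ∧ ↑ₘA = c • (1 + N) := by
  obtain ⟨A, rfl⟩ := QuotientGroup.mk_surjective x
  obtain ⟨c, hc, hAc⟩ := mk_eq_one_iff.mp (by rwa [← QuotientGroup.mk_pow] at hxn)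
  obtain ⟨m, hm⟩ := hp.pow (n := n)
  have hcc : c * c = 1 := by rw [← sq, hc]
  -- `c • A` is unipotent because `c ^ 2 = 1` and `p ^ n` is odd.
  have hU : (c • ↑ₘA) ^ p ^ n = 1 := by
    rw [smul_pow, ← Matrix.SpecialLinearGroup.coe_pow, hAc, smul_smul, ← pow_succ, hm,
      show 2 * m + 1 + 1 = 2 * (m + 1) by ring, pow_mul, hc, one_pow, one_smul]
  have hnil : IsNilpotent (c • ↑ₘA - 1) :=
    ⟨p ^ n, by
      rw [sub_pow_char_pow_of_commute _ _ (Commute.one_right _), hU, one_pow, sub_self]⟩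
  have hN := pow_card_eq_zero_of_isNilpotent hnil
  rw [Fintype.card_fin] at hN
  have hA : ↑ₘA = c • (c • ↑ₘA) := by rw [smul_smul, hcc, one_smul]
  refine ⟨A, c, c • ↑ₘA - 1, rfl, hc, hN,
    fun h => hx (mk_eq_one_iff.mpr ⟨c, hc, ?_⟩), ?_⟩
  · rw [hA, sub_eq_zero.mp h]
  · rw [add_sub_cancel, ← hA]

theorem mk_pow_char_eq_one {M : SL(2, F)} {N : Matrix (Fin 2) (Fin 2) F} (hN : N ^ 2 = 0)
    {a b : F} (hM : ↑ₘM = a • 1 + b • N) : (M : PSL2 F) ^ p = 1 := by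
  have hMp : ↑ₘ(M ^ p) = a ^ p • 1 := by
    rw [Matrix.SpecialLinearGroup.coe_pow, hM, smul_one_add_smul_pow_char hN]
  have hdet : (a ^ p) ^ 2 = 1 := by simpa [hMp] using (M ^ p).2
  rw [← QuotientGroup.mk_pow]
  exact mk_eq_one_iff.mpr ⟨a ^ p, hdet, hMp⟩

theorem abelianPCentralizers (hp : Odd p) : AbelianPCentralizers p (PSL2 F) := by
  have : NeZero (2 : F) := ⟨Ring.two_ne_zero <| by
    rw [ringChar.eq F p]
    rintro rfl
    exact absurd hp (by decide)⟩
  rintro x hx ⟨n, hxn⟩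
  obtain ⟨A, c, N, rfl, hc, hN, hN0, hA⟩ := exists_lift_eq_smul_one_add hp hx hxn
  have hc0 : c ≠ 0 := by
    rintro rfl
    simp at hc
  have hlift := fun y (hy : y ∈ centralizer {(A : PSL2 F)}) =>
    exists_lift_eq_smul_one_add_smul_of_mem_centralizer hc0 hN hN0 hA hy
  constructor
  · rintro ⟨y, hy⟩
    obtain ⟨M, rfl, a, b, hM⟩ := hlift y hy
    exact ⟨1, Subtype.ext (by simpa using mk_pow_char_eq_one hN hM)⟩
  · rw [isMulCommutative_iff]
    rintro ⟨y, hy⟩ ⟨z, hz⟩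
    obtain ⟨M, rfl, a, b, hM⟩ := hlift y hy
    obtain ⟨M', rfl, a', b', hM'⟩ := hlift z hz
    exact Subtype.ext (commute_mk_of_coe_eq hM hM').eq

end PSL2

theorem sylow_trivial_intersection_psl2_general (p k q : ℕ) (hp : p.Prime) (hpodd : Odd p)
    (hq : q = p ^ k)
    (F : Type*) [Field F] [Fintype F] (hF : Fintype.card F = q) :
    (∀ U V : Sylow p (PSL2 F), U ≠ V →
        (U : Subgroup (PSL2 F)) ⊓ (V : Subgroup (PSL2 F)) = ⊥) ∧
    (∀ u : PSL2 F, orderOf u = p → ∃! U : Sylow p (PSL2 F), u ∈ U) := by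
  have : Fact p.Prime := ⟨hp⟩
  have : CharP F p := charP_of_card_eq_prime_pow (hF.trans hq)
  have hG := PSL2.abelianPCentralizers (F := F) hpodd
  refine ⟨fun U V hUV => Sylow.inf_eq_bot_of_ne hG hUV, fun u hu => ?_⟩
  have hu1 : u ≠ 1 := by
    rintro rfl
    exact hp.one_lt.ne (orderOf_one.symm.trans hu)
  exact Sylow.existsUnique_mem hG hu1 (n := 1) (by rw [pow_one, ← hu, pow_orderOf_eq_one])

/-- Let `q = p^k` be an odd prime power with `q > 3` and
`G = PSL₂(q)`.  Then any two distinct Sylow `p`-subgroups of `G` intersect trivially;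
equivalently, every element of `G` of order `p` lies in exactly one Sylow
`p`-subgroup of `G`. -/
theorem sylow_trivial_intersection_psl2 (p k q : ℕ) (hp : p.Prime) (hpodd : Odd p)
    (hq : q = p ^ k) (hq3 : 3 < q)
    (F : Type*) [Field F] [Fintype F] (hF : Fintype.card F = q) :
    (∀ U V : Sylow p (PSL2 F), U ≠ V →
        (U : Subgroup (PSL2 F)) ⊓ (V : Subgroup (PSL2 F)) = ⊥) ∧
    (∀ u : PSL2 F, orderOf u = p → ∃! U : Sylow p (PSL2 F), u ∈ U) :=
  sylow_trivial_intersection_psl2_general p k q hp hpodd hq F hF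
end

section
/- Let q be an odd prime power and let t be a generator of the multiplicative group F_q^× of the finite field F_q with q elements. Then the special linear group SL₂(F_q) is generated by the three matrices u(1) = [[1,1],[0,1]], h(t) = [[t,0],[0,t^{-1}]] and n(1) = [[0,1],[−1,0]]. -/
/-- The upper unitriangular matrix `u(t) = [[1,t],[0,1]]` in `SL₂(F)`. -/
def SL2u (F : Type*) [Field F] (t : F) : Matrix.SpecialLinearGroup (Fin 2) F :=
  ⟨!![1, t; 0, 1], by simp [Matrix.det_fin_two_of]⟩

/-- The diagonal matrix `h(s) = [[s,0],[0,s⁻¹]]` in `SL₂(F)`. -/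
def SL2h (F : Type*) [Field F] (s : Fˣ) : Matrix.SpecialLinearGroup (Fin 2) F :=
  ⟨!![(s : F), 0; 0, ((s⁻¹ : Fˣ) : F)], by simp [Matrix.det_fin_two_of]⟩

/-- The monomial matrix `n(s) = [[0,s],[−s⁻¹,0]]` in `SL₂(F)`. -/
def SL2n (F : Type*) [Field F] (s : Fˣ) : Matrix.SpecialLinearGroup (Fin 2) F :=
  ⟨!![0, (s : F); -((s⁻¹ : Fˣ) : F), 0], by simp [Matrix.det_fin_two_of]⟩

/-!
Conjugating `u(1)` by `h(s)` gives `u(s²)`, and the powers of `h(t)` exhaust all `h(s)`, so the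
subgroup contains `u(a²)` for every `a`. In a finite field every element is a sum of two squares,
hence the subgroup contains every `u(x)`; conjugating by `n(1)` yields every lower unitriangular
matrix, and these two families of transvections generate `SL₂` of any field.
-/

namespace FiniteField

open Polynomial

theorem exists_sq_add_sq {F : Type*} [Field F] [Fintype F] (x : F) :
    ∃ a b : F, a ^ 2 + b ^ 2 = x := by
  by_cases hF : ringChar F = 2
  · obtain ⟨a, rfl⟩ := isSquare_of_char_two hF x
    exact ⟨a, 0, by ring⟩
  obtain ⟨a, b, hab⟩ := exists_root_sum_quadratic (degree_X_pow 2)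
    (degree_X_pow_sub_C two_pos x) (Nat.mod_two_ne_zero.mp (mt even_card_iff_char_two.mpr hF))
  refine ⟨a, b, ?_⟩
  simpa [← add_sub_assoc, sub_eq_zero] using hab

end FiniteField

section SL2

open Matrix.SpecialLinearGroup

variable {F : Type*} [Field F]

theorem SL2u_eq_transvection (x : F) : SL2u F x = transvection zero_ne_one x := by
  ext i j
  fin_cases i <;> fin_cases j <;> simp [SL2u, transvection_coe]

theorem SL2h_mul (s r : Fˣ) : SL2h F (s * r) = SL2h F s * SL2h F r := by
  ext i j
  rw [coe_mul]
  fin_cases i <;> fin_cases j <;> simp [SL2h, Matrix.mul_apply, mul_comm]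

theorem SL2h_zpow (s : Fˣ) (k : ℤ) : SL2h F (s ^ k) = SL2h F s ^ k :=
  map_zpow (MonoidHom.mk' (SL2h F) SL2h_mul) s k

theorem SL2h_mul_SL2u (s : Fˣ) (x : F) :
    SL2h F s * SL2u F x = SL2u F ((s : F) ^ 2 * x) * SL2h F s := by
  ext i j
  rw [coe_mul, coe_mul]
  fin_cases i <;> fin_cases j <;> simp [SL2u, SL2h, Matrix.mul_apply]
  field_simp

theorem SL2n_one_mul_SL2u (x : F) :
    SL2n F 1 * SL2u F x = transvection one_ne_zero (-x) * SL2n F 1 := by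
  ext i j
  rw [coe_mul, coe_mul]
  fin_cases i <;> fin_cases j <;> simp [SL2u, SL2n, transvection_coe, Matrix.mul_apply]

theorem SL2u_sq_mem {H : Subgroup (Matrix.SpecialLinearGroup (Fin 2) F)}
    (hu : SL2u F 1 ∈ H) (hh : ∀ s, SL2h F s ∈ H) (a : F) : SL2u F (a ^ 2) ∈ H := by
  rcases eq_or_ne a 0 with rfl | ha
  · simp [SL2u_eq_transvection, transvection_coeff_zero, H.one_mem]
  have hconj := mul_inv_eq_of_eq_mul (SL2h_mul_SL2u (Units.mk0 a ha) 1)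
  rw [Units.val_mk0, mul_one] at hconj
  exact hconj ▸ mul_mem (mul_mem (hh _) hu) (inv_mem (hh _))

theorem SL2u_mem_of_SL2h_mem [Fintype F] {H : Subgroup (Matrix.SpecialLinearGroup (Fin 2) F)}
    (hu : SL2u F 1 ∈ H) (hh : ∀ s, SL2h F s ∈ H) (x : F) : SL2u F x ∈ H := by
  obtain ⟨a, b, rfl⟩ := FiniteField.exists_sq_add_sq x
  rw [SL2u_eq_transvection, transvection_add, ← SL2u_eq_transvection, ← SL2u_eq_transvection]
  exact mul_mem (SL2u_sq_mem hu hh a) (SL2u_sq_mem hu hh b)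

theorem eq_top_of_SL2u_mem_of_SL2n_mem {H : Subgroup (Matrix.SpecialLinearGroup (Fin 2) F)}
    (hu : ∀ x, SL2u F x ∈ H) (hn : SL2n F 1 ∈ H) : H = ⊤ := by
  have hv (x : F) : transvection one_ne_zero x ∈ H := by
    have hconj := mul_inv_eq_of_eq_mul (SL2n_one_mul_SL2u (-x))
    rw [neg_neg] at hconj
    exact hconj ▸ mul_mem (mul_mem hn (hu _)) (inv_mem hn)
  refine eq_top_iff.mpr fun g _ ↦
    Matrix.SL2.transvection_induction (· ∈ H) ?_ (fun _ _ ↦ mul_mem) g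
  intro i j hij x
  fin_cases i <;> fin_cases j
  · exact absurd rfl hij
  · exact SL2u_eq_transvection x ▸ hu x
  · exact hv x
  · exact absurd rfl hij

end SL2

theorem sl2_generated_by_steinberg_generators_general (F : Type*) [Field F] [Fintype F]
    (t : Fˣ) (ht : ∀ x : Fˣ, x ∈ Subgroup.zpowers t) :
    Subgroup.closure
      ({SL2u F 1, SL2h F t, SL2n F 1} : Set (Matrix.SpecialLinearGroup (Fin 2) F)) =
      ⊤ := by
  set G := Subgroup.closure
    ({SL2u F 1, SL2h F t, SL2n F 1} : Set (Matrix.SpecialLinearGroup (Fin 2) F))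
  have hu : SL2u F 1 ∈ G := Subgroup.subset_closure (by simp)
  have hh : SL2h F t ∈ G := Subgroup.subset_closure (by simp)
  have hn : SL2n F 1 ∈ G := Subgroup.subset_closure (by simp)
  have hdiag (s : Fˣ) : SL2h F s ∈ G := by
    obtain ⟨k, rfl⟩ := Subgroup.mem_zpowers_iff.mp (ht s)
    exact SL2h_zpow t k ▸ zpow_mem hh k
  exact eq_top_of_SL2u_mem_of_SL2n_mem (SL2u_mem_of_SL2h_mem hu hdiag) hn

/-- Let `q` be an odd prime power and `t` a generator of `F_q^×`.
Then `SL₂(F_q)` is generated by `u(1)`, `h(t)` and `n(1)`. -/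
theorem sl2_generated_by_steinberg_generators (F : Type*) [Field F] [Fintype F]
    (hodd : Odd (Fintype.card F))
    (t : Fˣ) (ht : ∀ x : Fˣ, x ∈ Subgroup.zpowers t) :
    Subgroup.closure
      ({SL2u F 1, SL2h F t, SL2n F 1} : Set (Matrix.SpecialLinearGroup (Fin 2) F)) =
      ⊤ :=
  sl2_generated_by_steinberg_generators_general F t ht
end
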